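/- arXiv:1612.04472 — 11 statements merged into one kernel-verified Lean document; each statement's English description precedes it below -/
import Mathlib

section
/- Let n ≥ 1 and let A be a symmetric (n+1)×(n+1) real matrix with A_ii = 0 for all i. For x ∈ ℝ^n set x_{n+1} := 1 − Σ_{i=1}^n x_i and define g^{ij}(x) := −A_{ij} x_i x_j + δ_{ij} x_i Σ_{k=1}^{n+1} A_{ik} x_k for 1 ≤ i,j ≤ n. Then for every λ ∈ ℝ^n one has Σ_{i,j=1}^n g^{ij}(x) λ_i λ_j = Σ_{1≤i<j≤n} A_{ij} x_i x_j (λ_i − λ_j)^2 + Σ_{i=1}^n A_{i,n+1} x_i x_{n+1} λ_i^2. -/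
open Finset

lemma pair_sum_aux {n : ℕ} (F : Fin n → Fin n → ℝ) (hd : ∀ i, F i i = 0) :
    ∑ i : Fin n, ∑ j : Fin n, F i j
      = ∑ i : Fin n, ∑ j ∈ Finset.univ.filter (fun j => i < j), (F i j + F j i) := by
  have h1 : ∀ i : Fin n, ∑ j : Fin n, F i j
      = (∑ j ∈ Finset.univ.filter (fun j => i < j), F i j)
        + ∑ j ∈ Finset.univ.filter (fun j => j < i), F i j := by
    intro i
    rw [← Finset.sum_filter_add_sum_filter_not Finset.univ (fun j => i < j) (F i)]
    congr 1
    rw [Finset.sum_filter, Finset.sum_filter]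
    refine Finset.sum_congr rfl fun j _ => ?_
    rcases lt_trichotomy i j with h | h | h
    · simp [h, not_lt.mpr h.le, asymm h]
    · subst h; simp [hd]
    · simp [h, not_lt.mpr h.le, le_of_lt h]
  have h2 : ∑ i : Fin n, ∑ j ∈ Finset.univ.filter (fun j => j < i), F i j
      = ∑ j : Fin n, ∑ i ∈ Finset.univ.filter (fun i => j < i), F i j := by
    apply Finset.sum_comm'
    intro a b
    simp [and_comm]
  calc ∑ i : Fin n, ∑ j : Fin n, F i j
      = (∑ i : Fin n, ∑ j ∈ Finset.univ.filter (fun j => i < j), F i j)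
        + ∑ i : Fin n, ∑ j ∈ Finset.univ.filter (fun j => j < i), F i j := by
        rw [← Finset.sum_add_distrib]; exact Finset.sum_congr rfl fun i _ => h1 i
    _ = (∑ i : Fin n, ∑ j ∈ Finset.univ.filter (fun j => i < j), F i j)
        + ∑ i : Fin n, ∑ j ∈ Finset.univ.filter (fun j => i < j), F j i := by rw [h2]
    _ = _ := by rw [← Finset.sum_add_distrib]
                refine Finset.sum_congr rfl fun i _ => ?_
                rw [← Finset.sum_add_distrib]

/-- The quadratic form of the co-metric `Γ_A` of the Dirichlet diffusion model
on the simplex decomposes as a sum of squares. -/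
theorem stmt_0 (n : ℕ) (hn : 1 ≤ n)
    (A : Fin (n + 1) → Fin (n + 1) → ℝ)
    (hsymm : ∀ i j, A i j = A j i)
    (hdiag : ∀ i, A i i = 0)
    (x lam : Fin n → ℝ) :
    (∑ i : Fin n, ∑ j : Fin n,
        (-(A i.castSucc j.castSucc) * x i * x j
          + (if i = j then x i * ∑ k : Fin (n + 1),
              A i.castSucc k * (Fin.snoc x (1 - ∑ m : Fin n, x m) : Fin (n+1) → ℝ) k else 0))
          * lam i * lam j)
      = (∑ i : Fin n, ∑ j ∈ Finset.univ.filter (fun j => i < j),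
          A i.castSucc j.castSucc * x i * x j * (lam i - lam j) ^ 2)
        + ∑ i : Fin n,
            A i.castSucc (Fin.last n) * x i * (1 - ∑ m : Fin n, x m) * lam i ^ 2 := by
  set s := 1 - ∑ m : Fin n, x m with hs
  have hk : ∀ i : Fin n, (∑ k : Fin (n+1), A i.castSucc k * (Fin.snoc x s : Fin (n+1) → ℝ) k)
      = (∑ j : Fin n, A i.castSucc j.castSucc * x j) + A i.castSucc (Fin.last n) * s := by
    intro i
    rw [Fin.sum_univ_castSucc]
    simp
  -- Split the LHS
  have lhs_eq : (∑ i : Fin n, ∑ j : Fin n,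
        (-(A i.castSucc j.castSucc) * x i * x j
          + (if i = j then x i * ∑ k : Fin (n + 1),
              A i.castSucc k * (Fin.snoc x s : Fin (n+1) → ℝ) k else 0))
          * lam i * lam j)
      = (∑ i : Fin n, ∑ j : Fin n,
          A i.castSucc j.castSucc * x i * x j * (lam i ^ 2 - lam i * lam j))
        + ∑ i : Fin n, A i.castSucc (Fin.last n) * x i * s * lam i ^ 2 := by
    have step : ∀ i : Fin n, (∑ j : Fin n,
        (-(A i.castSucc j.castSucc) * x i * x j
          + (if i = j then x i * ∑ k : Fin (n + 1),
              A i.castSucc k * (Fin.snoc x s : Fin (n+1) → ℝ) k else 0))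
          * lam i * lam j)
        = (∑ j : Fin n, A i.castSucc j.castSucc * x i * x j * (lam i ^ 2 - lam i * lam j))
          + A i.castSucc (Fin.last n) * x i * s * lam i ^ 2 := by
      intro i
      have : ∀ j : Fin n,
          (-(A i.castSucc j.castSucc) * x i * x j
            + (if i = j then x i * ∑ k : Fin (n + 1),
                A i.castSucc k * (Fin.snoc x s : Fin (n+1) → ℝ) k else 0))
            * lam i * lam j
          = -(A i.castSucc j.castSucc) * x i * x j * lam i * lam j
            + (if i = j then (x i * ∑ k : Fin (n + 1),
                A i.castSucc k * (Fin.snoc x s : Fin (n+1) → ℝ) k) * lam i * lam j else 0) := by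
        intro j
        split <;> ring
      rw [Finset.sum_congr rfl fun j _ => this j, Finset.sum_add_distrib,
        Finset.sum_ite_eq Finset.univ i, if_pos (Finset.mem_univ i), hk i]
      rw [mul_add, add_mul, add_mul, Finset.mul_sum, Finset.sum_mul, Finset.sum_mul,
        ← add_assoc, ← Finset.sum_add_distrib]
      rw [Finset.sum_congr rfl (fun j _ => by ring :
        ∀ j ∈ Finset.univ, -(A i.castSucc j.castSucc) * x i * x j * lam i * lam j
          + x i * (A i.castSucc j.castSucc * x j) * lam i * lam i
          = A i.castSucc j.castSucc * x i * x j * (lam i ^ 2 - lam i * lam j))]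
      ring
    rw [Finset.sum_congr rfl fun i _ => step i, Finset.sum_add_distrib]
  rw [lhs_eq]
  congr 1
  rw [pair_sum_aux (fun i j => A i.castSucc j.castSucc * x i * x j * (lam i ^ 2 - lam i * lam j))
    (fun i => by simp [hdiag])]
  refine Finset.sum_congr rfl fun i _ => Finset.sum_congr rfl fun j _ => ?_
  have := hsymm i.castSucc j.castSucc
  rw [this]; ring
end

section
/- Let n ≥ 1 and let A be a symmetric (n+1)×(n+1) real matrix with A_ii = 0 for all i and A_{ij} > 0 for all i ≠ j. For x ∈ ℝ^n set x_{n+1} := 1 − Σ_{i=1}^n x_i and define g^{ij}(x) := −A_{ij} x_i x_j + δ_{ij} x_i Σ_{k=1}^{n+1} A_{ik} x_k for 1 ≤ i,j ≤ n. Then for every x in the interior Δ_n° of the simplex, the n×n real symmetric matrix (g^{ij}(x)) is positive definite. -/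
/-!
With `X := (x, x_{n+1})` and weights `W i k := A i k * X i * X k`, the matrix `g` is the
weighted graph Laplacian `diag (∑ₖ W i k) - W` of the complete graph on `n + 1` vertices, with the
row and column of the last vertex deleted. Its quadratic form is `½ ∑ᵢₖ W i k (v i - v k)²`;
extending `v ≠ 0` by `v_{n+1} = 0`, the term joining a vertex with `v i ≠ 0` to the last vertex
is strictly positive.
-/

open Finset Function

namespace Matrix

variable {ι κ R : Type*} [Fintype ι] [Fintype κ]

def weightedLaplacian [DecidableEq ι] [AddCommGroup R] (W : Matrix ι ι R) : Matrix ι ι R :=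
  diagonal (fun i => ∑ k, W i k) - W

theorem dotProduct_submatrix_mulVec_eq_extend [CommSemiring R] (M : Matrix ι ι R) {e : κ → ι}
    (he : Injective e) (v : κ → R) :
    v ⬝ᵥ (M.submatrix e e *ᵥ v) = extend e v 0 ⬝ᵥ (M *ᵥ extend e v 0) := by
  have hext : ∀ i ∉ Set.range e, extend e v 0 i = 0 := fun i hi => by
    rw [extend_apply' _ _ _ (by simpa using hi), Pi.zero_apply]
  refine Fintype.sum_of_injective e he _ _ (fun i hi => by simp [hext i hi]) fun a => ?_
  simp only [mulVec, dotProduct, submatrix_apply, he.extend_apply]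
  congr 1
  exact Fintype.sum_of_injective e he _ _ (fun i hi => by simp [hext i hi])
    fun b => by rw [he.extend_apply]

variable [DecidableEq ι]

theorem two_mul_dotProduct_weightedLaplacian_mulVec [CommRing R] {W : Matrix ι ι R}
    (hW : W.IsSymm) (v : ι → R) :
    2 * (v ⬝ᵥ (weightedLaplacian W *ᵥ v)) = ∑ i, ∑ k, W i k * (v i - v k) ^ 2 := by
  have hquad : v ⬝ᵥ (weightedLaplacian W *ᵥ v)
      = ∑ i, ∑ k, W i k * v i ^ 2 - ∑ i, v i * ∑ k, W i k * v k := by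
    rw [weightedLaplacian, sub_mulVec, dotProduct_sub]
    congr 1
    simp only [dotProduct, mulVec_diagonal, Finset.mul_sum, Finset.sum_mul]
    exact Fintype.sum_congr _ _ fun i => Fintype.sum_congr _ _ fun k => by ring
  have hswap : ∑ i, ∑ k, W i k * v k ^ 2 = ∑ i, ∑ k, W i k * v i ^ 2 := by
    rw [Finset.sum_comm]
    exact Fintype.sum_congr _ _ fun i => Fintype.sum_congr _ _ fun k => by
      rw [hW.apply k i]
  have hexpand : ∀ i k, W i k * (v i - v k) ^ 2
      = W i k * v i ^ 2 + W i k * v k ^ 2 - 2 * (v i * (W i k * v k)) := fun i k => by ring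
  simp only [hexpand, Finset.sum_add_distrib, Finset.sum_sub_distrib, hswap, ← Finset.mul_sum,
    hquad]
  ring

theorem isSymm_weightedLaplacian [AddCommGroup R] {W : Matrix ι ι R} (hW : W.IsSymm) :
    (weightedLaplacian W).IsSymm :=
  (isSymm_diagonal _).sub hW

theorem dotProduct_weightedLaplacian_mulVec_pos {W : Matrix ι ι ℝ} (hW : W.IsSymm)
    (hW0 : ∀ i k, i ≠ k → 0 ≤ W i k) {j : ι} (hj : ∀ i, i ≠ j → 0 < W i j) {v : ι → ℝ}
    (hvj : v j = 0) (hv : v ≠ 0) : 0 < v ⬝ᵥ (weightedLaplacian W *ᵥ v) := by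
  rw [← mul_pos_iff_of_pos_left (two_pos : (0 : ℝ) < 2),
    two_mul_dotProduct_weightedLaplacian_mulVec hW]
  have hterm : ∀ i k, 0 ≤ W i k * (v i - v k) ^ 2 := fun i k => by
    rcases eq_or_ne i k with rfl | hik
    · simp
    · exact mul_nonneg (hW0 i k hik) (sq_nonneg _)
  obtain ⟨i, hi⟩ := Function.ne_iff.mp hv
  have hij : i ≠ j := fun h => hi (h ▸ hvj)
  refine Finset.sum_pos' (fun i _ => Finset.sum_nonneg fun k _ => hterm i k)
    ⟨i, Finset.mem_univ _, Finset.sum_pos' (fun k _ => hterm i k) ⟨j, Finset.mem_univ _, ?_⟩⟩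
  rw [hvj, sub_zero]
  exact mul_pos (hj i hij) (pow_two_pos_of_ne_zero hi)

theorem posDef_submatrix_weightedLaplacian {W : Matrix ι ι ℝ} (hW : W.IsSymm)
    (hW0 : ∀ i k, i ≠ k → 0 ≤ W i k) {j : ι} (hj : ∀ i, i ≠ j → 0 < W i j) {e : κ → ι}
    (he : Injective e) (hje : j ∉ Set.range e) : ((weightedLaplacian W).submatrix e e).PosDef := by
  refine PosDef.of_dotProduct_mulVec_pos
    (isHermitian_iff_isSymm.mpr ((isSymm_weightedLaplacian hW).submatrix e)) fun v hv => ?_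
  rw [star_trivial, dotProduct_submatrix_mulVec_eq_extend _ he]
  refine dotProduct_weightedLaplacian_mulVec_pos hW hW0 hj ?_ fun h => hv ?_
  · rw [extend_apply' _ _ _ (by simpa using hje), Pi.zero_apply]
  · funext a
    rw [← he.extend_apply v 0 a, h, Pi.zero_apply, Pi.zero_apply]

end Matrix

theorem stmt_1_general (n : ℕ)
    (A : Fin (n + 1) → Fin (n + 1) → ℝ)
    (hsymm : ∀ i j, A i j = A j i)
    (hpos : ∀ i j, i ≠ j → 0 < A i j)
    (x : Fin n → ℝ) (hx : ∀ i, 0 < x i) (hxsum : ∑ i, x i < 1) :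
    Matrix.PosDef (Matrix.of fun i j : Fin n =>
      -(A i.castSucc j.castSucc) * x i * x j
        + (if i = j then x i * ∑ k : Fin (n + 1),
            A i.castSucc k * (Fin.snoc x (1 - ∑ m : Fin n, x m) : Fin (n+1) → ℝ) k
          else 0)) := by
  set X : Fin (n + 1) → ℝ := Fin.snoc x (1 - ∑ m : Fin n, x m)
  have hX : ∀ i, 0 < X i :=
    Fin.lastCases (by simpa [X] using hxsum) fun i => by simpa [X] using hx i
  set W : Matrix (Fin (n + 1)) (Fin (n + 1)) ℝ := Matrix.of fun i k => A i k * X i * X k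
  have hW : W.IsSymm := Matrix.IsSymm.ext fun i k => by
    simp only [W, Matrix.of_apply, hsymm i k]; ring
  have hWpos : ∀ i k, i ≠ k → 0 < W i k := fun i k hik =>
    mul_pos (mul_pos (hpos i k hik) (hX i)) (hX k)
  convert Matrix.posDef_submatrix_weightedLaplacian hW (fun i k hik => (hWpos i k hik).le)
    (fun i hi => hWpos i (Fin.last n) hi) (Fin.castSucc_injective n) (by simp) using 1
  ext i j
  have hXc : ∀ i : Fin n, X i.castSucc = x i := fun i => Fin.snoc_castSucc _ _ _
  simp only [Matrix.of_apply, Matrix.submatrix_apply, Matrix.weightedLaplacian, Matrix.sub_apply,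
    Matrix.diagonal_apply, Fin.castSucc_inj, W, hXc]
  split_ifs
  · rw [Finset.mul_sum, add_comm, neg_mul, neg_mul, ← sub_eq_add_neg]
    exact congrArg₂ _ (Fintype.sum_congr _ _ fun k => by ring) rfl
  · ring

/-- Ellipticity of the co-metric `Γ_A` of the Dirichlet diffusion model on the
interior of the simplex, when the off-diagonal entries of `A` are positive. -/
theorem stmt_1 (n : ℕ) (hn : 1 ≤ n)
    (A : Fin (n + 1) → Fin (n + 1) → ℝ)
    (hsymm : ∀ i j, A i j = A j i)
    (hdiag : ∀ i, A i i = 0)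
    (hpos : ∀ i j, i ≠ j → 0 < A i j)
    (x : Fin n → ℝ) (hx : ∀ i, 0 < x i) (hxsum : ∑ i, x i < 1) :
    Matrix.PosDef (Matrix.of fun i j : Fin n =>
      -(A i.castSucc j.castSucc) * x i * x j
        + (if i = j then x i * ∑ k : Fin (n + 1),
            A i.castSucc k * (Fin.snoc x (1 - ∑ m : Fin n, x m) : Fin (n+1) → ℝ) k
          else 0)) :=
  stmt_1_general n A hsymm hpos x hx hxsum
end

section
/- Let N ≥ 1 and let I_1, …, I_{n+1} be a partition of {1,…,N} into disjoint nonempty sets with |I_i| = p_i. For y ∈ ℝ^N define x_k(y) := Σ_{r ∈ I_k} y_r^2 for k = 1,…,n+1, and for indices p ≠ q define the first-order differential operator D_{pq} f := y_p ∂_q f − y_q ∂_p f. Then for all i ≠ j in {1,…,n+1} and all k, l ∈ {1,…,n+1}: (a) Σ_{p ∈ I_i, q ∈ I_j} (D_{pq} x_k)(y) · (D_{pq} x_l)(y) = 4 x_i(y) x_j(y) (δ_{jk} − δ_{ik})(δ_{jl} − δ_{il}); (b) Σ_{p ∈ I_i, q ∈ I_j} D_{pq}(D_{pq} x_k)(y)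 = 2 (δ_{jk} − δ_{ik}) (p_j x_i(y) − p_i x_j(y)). -/
open Finset

/-- The first-order differential operator `D_{pq} f = y_p ∂_q f - y_q ∂_p f` on `ℝ^N`. -/
noncomputable def Dop3 {N : ℕ} (p q : Fin N) (f : (Fin N → ℝ) → ℝ) (y : Fin N → ℝ) : ℝ :=
  y p * fderiv ℝ f y (Pi.single q 1) - y q * fderiv ℝ f y (Pi.single p 1)

/-- The squared-norm coordinates `x_k(y) = Σ_{r ∈ I_k} y_r²`. -/
def xfun3 {N n : ℕ} (I : Fin (n + 1) → Finset (Fin N)) (k : Fin (n + 1))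
    (y : Fin N → ℝ) : ℝ :=
  ∑ r ∈ I k, y r ^ 2

/-!
On the coordinates `x_k` the operator `D_{pq}` acts as multiplication of the monomial `y_p y_q`
by `2(1_{q ∈ I_k} - 1_{p ∈ I_k})`, and `D_{pq}(y_p y_q) = y_p² - y_q²`. For `p ∈ I_i`, `q ∈ I_j`
the indicator factor is `2(δ_{jk} - δ_{ik})` by disjointness, so both identities reduce to
summing `y_p² y_q²` and `y_p² - y_q²` over `I_i × I_j`.
-/

section Calculus

variable {ι : Type*} [Fintype ι]

theorem hasFDerivAt_sum_sq (s : Finset ι) (y : ι → ℝ) :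
    HasFDerivAt (fun z : ι → ℝ => ∑ r ∈ s, z r ^ 2)
      (∑ r ∈ s, (2 * y r) • (ContinuousLinearMap.proj r : (ι → ℝ) →L[ℝ] ℝ)) y := by
  refine HasFDerivAt.fun_sum fun r _ => ?_
  have hr := hasFDerivAt_apply (𝕜 := ℝ) r y
  simpa [sq, two_mul, add_smul] using hr.fun_mul hr

theorem fderiv_sum_sq_single [DecidableEq ι] (s : Finset ι) (y : ι → ℝ) (q : ι) :
    fderiv ℝ (fun z : ι → ℝ => ∑ r ∈ s, z r ^ 2) y (Pi.single q 1)
      = if q ∈ s then 2 * y q else 0 := by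
  simp [(hasFDerivAt_sum_sq s y).fderiv, Pi.single_apply]

theorem fderiv_mul_coord_single [DecidableEq ι] (c : ℝ) (y : ι → ℝ) (p q r : ι) :
    fderiv ℝ (fun z : ι → ℝ => c * (z p * z q)) y (Pi.single r 1)
      = c * ((Pi.single r 1 : ι → ℝ) p * y q + y p * (Pi.single r 1 : ι → ℝ) q) := by
  have hp := hasFDerivAt_apply (𝕜 := ℝ) p y
  have hq := hasFDerivAt_apply (𝕜 := ℝ) q y
  rw [((hp.fun_mul hq).const_mul c).fderiv]
  simp only [_root_.smul_apply, _root_.add_apply,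
    ContinuousLinearMap.proj_apply, smul_eq_mul]
  ring

end Calculus

section Dop3

variable {N n : ℕ}

theorem Dop3_xfun3 (I : Fin (n + 1) → Finset (Fin N)) (k : Fin (n + 1)) (y : Fin N → ℝ)
    (p q : Fin N) :
    Dop3 p q (xfun3 I k) y
      = ((if q ∈ I k then (2 : ℝ) else 0) - (if p ∈ I k then 2 else 0)) * (y p * y q) := by
  rw [Dop3, show xfun3 I k = fun z => ∑ r ∈ I k, z r ^ 2 from rfl, fderiv_sum_sq_single,
    fderiv_sum_sq_single]
  split_ifs <;> ring

theorem Dop3_mul_coord {p q : Fin N} (hpq : p ≠ q) (c : ℝ) (y : Fin N → ℝ) :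
    Dop3 p q (fun z => c * (z p * z q)) y = c * (y p ^ 2 - y q ^ 2) := by
  rw [Dop3, fderiv_mul_coord_single, fderiv_mul_coord_single, Pi.single_eq_same,
    Pi.single_eq_same, Pi.single_eq_of_ne hpq, Pi.single_eq_of_ne hpq.symm]
  ring

theorem Dop3_Dop3_xfun3 (I : Fin (n + 1) → Finset (Fin N)) (k : Fin (n + 1)) (y : Fin N → ℝ)
    {p q : Fin N} (hpq : p ≠ q) :
    Dop3 p q (Dop3 p q (xfun3 I k)) y
      = ((if q ∈ I k then (2 : ℝ) else 0) - (if p ∈ I k then 2 else 0))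
          * (y p ^ 2 - y q ^ 2) := by
  rw [show Dop3 p q (xfun3 I k) = _ from funext fun z => Dop3_xfun3 I k z p q,
    Dop3_mul_coord hpq]

end Dop3

section Disjoint

variable {α β : Type*} {I : α → Finset β}

theorem mem_iff_eq_of_pairwise_disjoint (hdisj : ∀ i j, i ≠ j → Disjoint (I i) (I j))
    {i : α} {r : β} (hr : r ∈ I i) (k : α) :
    r ∈ I k ↔ i = k :=
  ⟨fun hk => by_contra fun hik => disjoint_left.mp (hdisj i k hik) hr hk, fun h => h ▸ hr⟩

theorem indicator_sub_eq_delta_sub [DecidableEq α] [DecidableEq β]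
    (hdisj : ∀ i j, i ≠ j → Disjoint (I i) (I j))
    {i j : α} {p q : β} (hp : p ∈ I i) (hq : q ∈ I j) (k : α) :
    (if q ∈ I k then (2 : ℝ) else 0) - (if p ∈ I k then 2 else 0)
      = 2 * ((if j = k then (1 : ℝ) else 0) - (if i = k then 1 else 0)) := by
  simp only [mem_iff_eq_of_pairwise_disjoint hdisj hp, mem_iff_eq_of_pairwise_disjoint hdisj hq]
  split_ifs <;> ring

end Disjoint

section Partition

variable {N n : ℕ} {I : Fin (n + 1) → Finset (Fin N)}

theorem Dop3_xfun3_of_mem (hdisj : ∀ i j, i ≠ j → Disjoint (I i) (I j))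
    {i j : Fin (n + 1)} {p q : Fin N} (hp : p ∈ I i) (hq : q ∈ I j) (k : Fin (n + 1))
    (y : Fin N → ℝ) :
    Dop3 p q (xfun3 I k) y
      = 2 * ((if j = k then (1 : ℝ) else 0) - (if i = k then 1 else 0)) * (y p * y q) := by
  rw [Dop3_xfun3, indicator_sub_eq_delta_sub hdisj hp hq]

theorem Dop3_Dop3_xfun3_of_mem (hdisj : ∀ i j, i ≠ j → Disjoint (I i) (I j))
    {i j : Fin (n + 1)} (hij : i ≠ j) {p q : Fin N} (hp : p ∈ I i) (hq : q ∈ I j)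
    (k : Fin (n + 1)) (y : Fin N → ℝ) :
    Dop3 p q (Dop3 p q (xfun3 I k)) y
      = 2 * ((if j = k then (1 : ℝ) else 0) - (if i = k then 1 else 0))
          * (y p ^ 2 - y q ^ 2) := by
  have hpq : p ≠ q := ne_of_mem_of_not_mem hp (disjoint_right.mp (hdisj i j hij) hq)
  rw [Dop3_Dop3_xfun3 I k y hpq, indicator_sub_eq_delta_sub hdisj hp hq]

end Partition

theorem sum_sum_sub {α β : Type*} (s : Finset α) (t : Finset β) (f : α → ℝ) (g : β → ℝ) :
    ∑ a ∈ s, ∑ b ∈ t, (f a - g b) = #t * ∑ a ∈ s, f a - #s * ∑ b ∈ t, g b := by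
  simp only [sum_sub_distrib, sum_const, nsmul_eq_mul, mul_sum]

theorem stmt_3_general (N n : ℕ)
    (I : Fin (n + 1) → Finset (Fin N)) (p : Fin (n + 1) → ℕ)
    (hdisj : ∀ i j, i ≠ j → Disjoint (I i) (I j))
    (hcard : ∀ i, (I i).card = p i)
    (i j : Fin (n + 1)) (hij : i ≠ j) (y : Fin N → ℝ) :
    (∀ k l, ∑ p' ∈ I i, ∑ q' ∈ I j, Dop3 p' q' (xfun3 I k) y * Dop3 p' q' (xfun3 I l) y
        = 4 * xfun3 I i y * xfun3 I j y
            * ((if j = k then (1 : ℝ) else 0) - (if i = k then 1 else 0))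
            * ((if j = l then (1 : ℝ) else 0) - (if i = l then 1 else 0)))
    ∧ (∀ k, ∑ p' ∈ I i, ∑ q' ∈ I j, Dop3 p' q' (Dop3 p' q' (xfun3 I k)) y
        = 2 * ((if j = k then (1 : ℝ) else 0) - (if i = k then 1 else 0))
            * ((p j : ℝ) * xfun3 I i y - (p i : ℝ) * xfun3 I j y)) := by
  refine ⟨fun k l => ?_, fun k => ?_⟩
  · rw [xfun3, xfun3, mul_assoc 4, sum_mul_sum]
    simp only [mul_sum, sum_mul]
    refine sum_congr rfl fun p' hp' => sum_congr rfl fun q' hq' => ?_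
    rw [Dop3_xfun3_of_mem hdisj hp' hq', Dop3_xfun3_of_mem hdisj hp' hq']
    ring
  · rw [← hcard i, ← hcard j, xfun3, xfun3, ← sum_sum_sub]
    simp only [mul_sum]
    exact sum_congr rfl fun p' hp' => sum_congr rfl fun q' hq' =>
      Dop3_Dop3_xfun3_of_mem hdisj hij hp' hq' k y

/-- Carré du champ and generator computations for the vector fields
`L_{i,j} = Σ_{p∈I_i, q∈I_j} (y_p∂_q - y_q∂_p)²` acting on the coordinates `x_k`. -/
theorem stmt_3 (N n : ℕ) (hN : 1 ≤ N)
    (I : Fin (n + 1) → Finset (Fin N)) (p : Fin (n + 1) → ℕ)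
    (hdisj : ∀ i j, i ≠ j → Disjoint (I i) (I j))
    (hcover : ∀ r, ∃ i, r ∈ I i)
    (hne : ∀ i, (I i).Nonempty)
    (hcard : ∀ i, (I i).card = p i)
    (i j : Fin (n + 1)) (hij : i ≠ j) (y : Fin N → ℝ) :
    (∀ k l, ∑ p' ∈ I i, ∑ q' ∈ I j, Dop3 p' q' (xfun3 I k) y * Dop3 p' q' (xfun3 I l) y
        = 4 * xfun3 I i y * xfun3 I j y
            * ((if j = k then (1 : ℝ) else 0) - (if i = k then 1 else 0))
            * ((if j = l then (1 : ℝ) else 0) - (if i = l then 1 else 0)))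
    ∧ (∀ k, ∑ p' ∈ I i, ∑ q' ∈ I j, Dop3 p' q' (Dop3 p' q' (xfun3 I k)) y
        = 2 * ((if j = k then (1 : ℝ) else 0) - (if i = k then 1 else 0))
            * ((p j : ℝ) * xfun3 I i y - (p i : ℝ) * xfun3 I j y)) :=
  stmt_3_general N n I p hdisj hcard i j hij y
end

section
/- Let n ≥ 0 and a_1, …, a_{n+1} > 0, and set a := Σ_{i=1}^{n+1} a_i. For y ∈ (0,∞)^{n+1} define the operator L f := Σ_{i=1}^{n+1} ( y_i ∂_i^2 f + (a_i − y_i) ∂_i f ) and the bilinear form Γ(f,g) := Σ_{i=1}^{n+1} y_i (∂_i f)(∂_i g). With S(y) := Σ_{i=1}^{n+1} y_i and z_i(y) := y_i / S(y), the following identities hold pointwise on (0,∞)^{n+1}: (1) L S = a − S; (2) L z_i = (a_i − a z_i)/S; (3) Γ(S, S) = S; (4) Γ(S, z_i) = 0; (5) Γ(z_i, z_j) = (δ_{ij} z_i − z_i z_j)/S. -/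
/-!
Along the coordinate line `t ↦ y + t e_j` one has `S = S(y) + t` and `z_i = (y_i + δ_ij t)/(S(y) + t)`,
which gives `∂_j S = 1`, `∂_j² S = 0`, `∂_j z_i = (δ_ij - z_i)/S` and `∂_j² z_i = -2 (δ_ij - z_i)/S²`.
Every identity then follows from the cancellation `∑_j y_j (δ_ij - z_i) = y_i - z_i S = 0`.
-/

open Finset

/-- Partial derivative `∂_i f` on `ℝ^m`. -/
noncomputable def pderiv4 {m : ℕ} (i : Fin m) (f : (Fin m → ℝ) → ℝ) (y : Fin m → ℝ) : ℝ :=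
  fderiv ℝ f y (Pi.single i 1)

/-- The generator of `n+1` independent Laguerre processes with parameters `a_i`. -/
noncomputable def Lag4 {n : ℕ} (a : Fin (n + 1) → ℝ) (f : (Fin (n + 1) → ℝ) → ℝ)
    (y : Fin (n + 1) → ℝ) : ℝ :=
  ∑ i, (y i * pderiv4 i (pderiv4 i f) y + (a i - y i) * pderiv4 i f y)

/-- The carré du champ of the Laguerre generator. -/
noncomputable def GammaLag4 {n : ℕ} (f g : (Fin (n + 1) → ℝ) → ℝ)
    (y : Fin (n + 1) → ℝ) : ℝ :=
  ∑ i, y i * pderiv4 i f y * pderiv4 i g y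

open Filter Topology

section PartialDerivatives

variable {m : ℕ} {f g : (Fin m → ℝ) → ℝ} {y : Fin m → ℝ} {i j : Fin m}

theorem pderiv4_eq_of_hasLineDerivAt {d : ℝ} (hf : DifferentiableAt ℝ f y)
    (h : HasLineDerivAt ℝ f d y (Pi.single j 1)) : pderiv4 j f y = d :=
  hf.lineDeriv_eq_fderiv.symm.trans h.lineDeriv

theorem pderiv4_congr (h : f =ᶠ[𝓝 y] g) : pderiv4 j f y = pderiv4 j g y := by
  rw [pderiv4, pderiv4, h.fderiv_eq]

theorem sum_add_smul_single (y : Fin m → ℝ) (j : Fin m) (t : ℝ) :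
    ∑ k, (y + t • Pi.single j 1 : Fin m → ℝ) k = ∑ k, y k + t := by
  simp [sum_add_distrib, ← mul_sum]

theorem add_smul_single_apply (y : Fin m → ℝ) (i j : Fin m) (t : ℝ) :
    (y + t • Pi.single j 1 : Fin m → ℝ) i = y i + (if i = j then 1 else 0) * t := by
  simp [Pi.single_apply]

theorem pderiv4_sum : pderiv4 j (fun y' => ∑ k, y' k) y = 1 := by
  refine pderiv4_eq_of_hasLineDerivAt (by fun_prop) ?_
  simp only [HasLineDerivAt, sum_add_smul_single]
  simpa using (hasDerivAt_id' (0 : ℝ)).const_add (∑ k, y k)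

theorem pderiv4_pderiv4_sum : pderiv4 j (pderiv4 j fun y' => ∑ k, y' k) y = 0 := by
  rw [show pderiv4 j (fun y' => ∑ k, y' k) = fun _ => 1 from funext fun _ => pderiv4_sum]
  simp [pderiv4]

theorem pderiv4_div_sum (hS : ∑ k, y k ≠ 0) :
    pderiv4 j (fun y' => y' i / ∑ k, y' k) y
      = ((if i = j then 1 else 0) - y i / ∑ k, y k) / ∑ k, y k := by
  refine pderiv4_eq_of_hasLineDerivAt (by fun_prop (disch := exact hS)) ?_
  simp only [HasLineDerivAt, ↓sum_add_smul_single, add_smul_single_apply]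
  refine ((((hasDerivAt_id' 0).const_mul _).const_add (y i)).div
    ((hasDerivAt_id' 0).const_add _) (by simpa using hS)).congr_deriv ?_
  simp only [mul_zero, add_zero, mul_one]
  field_simp

theorem pderiv4_pderiv4_div_sum (hS : ∑ k, y k ≠ 0) :
    pderiv4 j (pderiv4 j fun y' => y' i / ∑ k, y' k) y
      = -2 * ((if i = j then 1 else 0) - y i / ∑ k, y k) / (∑ k, y k) ^ 2 := by
  have hnear : ∀ᶠ y' in 𝓝 y, ∑ k, y' k ≠ 0 :=
    (continuous_finsetSum _ fun k _ => continuous_apply k).continuousAt.eventually_ne hS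
  -- in this form the numerator is constant along the line `t ↦ y + t e_j`
  rw [pderiv4_congr (g := fun y' => ((if i = j then 1 else 0) * ∑ k, y' k - y' i) / (∑ k, y' k) ^ 2)
    (hnear.mono fun y' h => by rw [pderiv4_div_sum h]; field_simp)]
  refine pderiv4_eq_of_hasLineDerivAt (by fun_prop (disch := simpa using hS)) ?_
  simp only [HasLineDerivAt, ↓sum_add_smul_single, add_smul_single_apply]
  refine (((((hasDerivAt_id' 0).const_add _).const_mul _).sub
    (((hasDerivAt_id' 0).const_mul _).const_add (y i))).div
    (((hasDerivAt_id' 0).const_add _).pow 2) (by simpa using hS)).congr_deriv ?_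
  simp only [Pi.sub_apply, Pi.pow_apply, mul_zero, add_zero, mul_one, sub_self, zero_mul]
  field_simp
  ring

end PartialDerivatives

theorem sum_mul_ite_sub {m : ℕ} (w : Fin m → ℝ) (i : Fin m) (c : ℝ) :
    ∑ j, w j * ((if i = j then 1 else 0) - c) = w i - c * ∑ j, w j := by
  simp [mul_sub, sum_sub_distrib, mul_sum, mul_comm]

theorem sum_mul_ite_sub_div_sum {m : ℕ} {y : Fin m → ℝ} (hS : ∑ k, y k ≠ 0) (i : Fin m) :
    ∑ j, y j * ((if i = j then 1 else 0) - y i / ∑ k, y k) = 0 := by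
  rw [sum_mul_ite_sub, div_mul_cancel₀ _ hS, sub_self]

section LaguerreIdentities

variable {n : ℕ} (a y : Fin (n + 1) → ℝ)

theorem Lag4_sum : Lag4 a (fun y' => ∑ i, y' i) y = ∑ i, a i - ∑ i, y i := by
  simp [Lag4, pderiv4_sum, pderiv4_pderiv4_sum, sum_sub_distrib]

theorem GammaLag4_sum_sum :
    GammaLag4 (fun y' => ∑ i, y' i) (fun y' => ∑ i, y' i) y = ∑ i, y i := by
  simp [GammaLag4, pderiv4_sum]

variable {y}

theorem Lag4_div_sum (hS : ∑ k, y k ≠ 0) (i : Fin (n + 1)) :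
    Lag4 a (fun y' => y' i / ∑ k, y' k) y
      = (a i - (∑ k, a k) * (y i / ∑ k, y k)) / ∑ k, y k := by
  set S := ∑ k, y k
  simp only [Lag4, pderiv4_div_sum hS, pderiv4_pderiv4_div_sum hS]
  have hterm : ∀ j, y j * (-2 * ((if i = j then 1 else 0) - y i / S) / S ^ 2)
      + (a j - y j) * (((if i = j then 1 else 0) - y i / S) / S)
      = a j * ((if i = j then 1 else 0) - y i / S) / S
        - y j * ((if i = j then 1 else 0) - y i / S) * (2 / S ^ 2 + 1 / S) := fun j => by ring
  rw [sum_congr rfl fun j _ => hterm j, sum_sub_distrib, ← sum_div, ← sum_mul,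
    sum_mul_ite_sub, sum_mul_ite_sub_div_sum hS]
  ring

theorem GammaLag4_sum_div_sum (hS : ∑ k, y k ≠ 0) (i : Fin (n + 1)) :
    GammaLag4 (fun y' => ∑ k, y' k) (fun y' => y' i / ∑ k, y' k) y = 0 := by
  simp only [GammaLag4, pderiv4_sum, pderiv4_div_sum hS, mul_one, ← mul_div_assoc, ← sum_div,
    sum_mul_ite_sub_div_sum hS, zero_div]

theorem GammaLag4_div_sum_div_sum (hS : ∑ k, y k ≠ 0) (i j : Fin (n + 1)) :
    GammaLag4 (fun y' => y' i / ∑ k, y' k) (fun y' => y' j / ∑ k, y' k) y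
      = ((if i = j then y i / ∑ k, y k else 0)
          - (y i / ∑ k, y k) * (y j / ∑ k, y k)) / ∑ k, y k := by
  set S := ∑ k, y k
  simp only [GammaLag4, pderiv4_div_sum hS]
  have hterm : ∀ k, y k * (((if i = k then 1 else 0) - y i / S) / S)
      * (((if j = k then 1 else 0) - y j / S) / S)
      = y k * ((if i = k then 1 else 0) - y i / S) * ((if j = k then 1 else 0) - y j / S)
        / S ^ 2 := fun k => by ring
  rw [sum_congr rfl fun k _ => hterm k, ← sum_div, sum_mul_ite_sub, sum_mul_ite_sub_div_sum hS]
  split_ifs with hij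
  · subst hij
    field_simp
    ring
  · field_simp
    ring

end LaguerreIdentities

theorem stmt_4_general (n : ℕ) (a : Fin (n + 1) → ℝ)
    (y : Fin (n + 1) → ℝ) (hy : ∀ i, 0 < y i) :
    (Lag4 a (fun y' => ∑ i, y' i) y = (∑ i, a i) - ∑ i, y i)
    ∧ (∀ i, Lag4 a (fun y' => y' i / ∑ k, y' k) y
        = (a i - (∑ k, a k) * (y i / ∑ k, y k)) / ∑ k, y k)
    ∧ (GammaLag4 (fun y' => ∑ i, y' i) (fun y' => ∑ i, y' i) y = ∑ i, y i)
    ∧ (∀ i, GammaLag4 (fun y' => ∑ k, y' k) (fun y' => y' i / ∑ k, y' k) y = 0)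
    ∧ (∀ i j, GammaLag4 (fun y' => y' i / ∑ k, y' k) (fun y' => y' j / ∑ k, y' k) y
        = ((if i = j then y i / ∑ k, y k else 0)
            - (y i / ∑ k, y k) * (y j / ∑ k, y k)) / ∑ k, y k) := by
  have hS : ∑ k, y k ≠ 0 := (sum_pos (fun i _ => hy i) univ_nonempty).ne'
  exact ⟨Lag4_sum a y, Lag4_div_sum a hS, GammaLag4_sum_sum y, GammaLag4_sum_div_sum hS,
    GammaLag4_div_sum_div_sum hS⟩

/-- The warped-product identities for `S = Σ y_i` and `z_i = y_i / S` under the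
Laguerre generator, valid pointwise on `(0,∞)^{n+1}`. -/
theorem stmt_4 (n : ℕ) (a : Fin (n + 1) → ℝ) (ha : ∀ i, 0 < a i)
    (y : Fin (n + 1) → ℝ) (hy : ∀ i, 0 < y i) :
    (Lag4 a (fun y' => ∑ i, y' i) y = (∑ i, a i) - ∑ i, y i)
    ∧ (∀ i, Lag4 a (fun y' => y' i / ∑ k, y' k) y
        = (a i - (∑ k, a k) * (y i / ∑ k, y k)) / ∑ k, y k)
    ∧ (GammaLag4 (fun y' => ∑ i, y' i) (fun y' => ∑ i, y' i) y = ∑ i, y i)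
    ∧ (∀ i, GammaLag4 (fun y' => ∑ k, y' k) (fun y' => y' i / ∑ k, y' k) y = 0)
    ∧ (∀ i j, GammaLag4 (fun y' => y' i / ∑ k, y' k) (fun y' => y' j / ∑ k, y' k) y
        = ((if i = j then y i / ∑ k, y k else 0)
            - (y i / ∑ k, y k) * (y j / ∑ k, y k)) / ∑ k, y k) :=
  stmt_4_general n a y hy
end

section
/- Let n ≥ 1, d ≥ 1, and let A be a symmetric (n+1)×(n+1) real matrix. For an interior point Z = (Z^(1),…,Z^(n)) of the complex matrix simplex Δ_{n,d}, set Z^(n+1) := Id − Σ_{k=1}^n Z^(k), and for an n-tuple Λ = (Λ^(1),…,Λ^(n)) of d×d Hermitian complex matrices set Λ^(n+1) := 0 and define the quadratic form Q_Z(Λ) := Σ_{1 ≤ p < q ≤ n+1} A_{pq} [ trace(Z^(q) C_{pq} Z^(p) C_{pq}) + trace(Z^(p) C_{pq} Z^(q) C_{pq}) ], where C_{pq} is the entrywise complex conjugate of Λ^(p) − Λ^(q). Then the following are equivalent: (i) for every interior point Z of Δ_{n,d} and every n-tuple Λ of Hermitian matrices with some Λ^(p) ≠ 0, Q_Z(Λ)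 is a positive real number; (ii) A_{pq} ≥ 0 for all p ≠ q, and A is irreducible, i.e. for all p ≠ q in {1,…,n+1} there exist indices p = p_0, p_1, …, p_k = q with A_{p_i p_{i+1}} > 0 for all i. -/
open Finset Matrix ComplexOrder

/-- The tuple `(Z^(1),…,Z^(n))` extended by `Z^(n+1) = Id - Σ Z^(k)`. -/
noncomputable def Zext9 {n d : ℕ} (Z : Fin n → Matrix (Fin d) (Fin d) ℂ) :
    Fin (n + 1) → Matrix (Fin d) (Fin d) ℂ :=
  Fin.snoc Z (1 - ∑ k, Z k)

/-- The tuple `(Λ^(1),…,Λ^(n))` extended by `Λ^(n+1) = 0`. -/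
noncomputable def Lext9 {n d : ℕ} (Λ : Fin n → Matrix (Fin d) (Fin d) ℂ) :
    Fin (n + 1) → Matrix (Fin d) (Fin d) ℂ :=
  Fin.snoc Λ 0

/-- The quadratic form `Q_Z(Λ)` associated with the co-metric `Γ_A` of the first matrix
Dirichlet model:
`Q_Z(Λ) = Σ_{p<q} A_{pq} [tr(Z^(q) C_{pq} Z^(p) C_{pq}) + tr(Z^(p) C_{pq} Z^(q) C_{pq})]`,
where `C_{pq}` is the entrywise conjugate of `Λ^(p) - Λ^(q)`. -/
noncomputable def Qform9 {n d : ℕ} (A : Fin (n + 1) → Fin (n + 1) → ℝ)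
    (Z Λ : Fin n → Matrix (Fin d) (Fin d) ℂ) : ℂ :=
  ∑ p : Fin (n + 1), ∑ q ∈ Finset.univ.filter (fun q => p < q),
    (A p q : ℂ) *
      ((Zext9 Z q * ((Lext9 Λ p - Lext9 Λ q).map (starRingEnd ℂ))
          * Zext9 Z p * ((Lext9 Λ p - Lext9 Λ q).map (starRingEnd ℂ))).trace
        + (Zext9 Z p * ((Lext9 Λ p - Lext9 Λ q).map (starRingEnd ℂ))
          * Zext9 Z q * ((Lext9 Λ p - Lext9 Λ q).map (starRingEnd ℂ))).trace)

/-!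
For positive definite `X`, `Y` and Hermitian `C`, `tr (X C Y C) = ‖√X C √Y‖²` (Frobenius norm),
which is positive as soon as `C ≠ 0`. Hence, if `A` is nonnegative off the diagonal, every term of
`Q_Z(Λ)` is nonnegative; if moreover `A` is irreducible, a positive path from an index where `Λ`
does not vanish to the index `n + 1`, where it does, has an edge along which `Λ` changes, and that
edge contributes a positive term.

Conversely, on scalar matrices `Z^(p) = w_p Id`, `Λ^(p) = m_p Id` the form `Q_Z(Λ)` is `d` times
`Σ_{p,q} A_pq w_p w_q (m_p - m_q)²`. Letting `w` tend to the indicator of `{s, t}` with `m` the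
indicator of `s` gives `A_st ≥ 0`. Taking `w` constant and `m` the indicator of the set of indices
reachable from `p` along positive entries of `A` (or of its complement, whichever misses `n + 1`)
makes the form vanish, so every index is reachable from `p`.
-/

namespace Matrix
open scoped MatrixOrder

lemma IsHermitian.map_starRingEnd {ι R : Type*} [CommSemiring R] [StarRing R]
    {H : Matrix ι ι R} (hH : H.IsHermitian) : H.map (starRingEnd R) = Hᵀ := by
  conv_rhs => rw [← hH.eq]
  rfl

variable {ι 𝕜 : Type*} [Fintype ι] [DecidableEq ι] [RCLike 𝕜] {X Y C : Matrix ι ι 𝕜}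

lemma trace_mul_mul_mul_eq_trace_mul_conjTranspose (hX : X.PosSemidef) (hY : Y.PosSemidef)
    (hC : C.IsHermitian) :
    (X * C * Y * C).trace
      = (CFC.sqrt X * C * CFC.sqrt Y * (CFC.sqrt X * C * CFC.sqrt Y)ᴴ).trace := by
  have hS : (CFC.sqrt X)ᴴ = CFC.sqrt X := (CFC.sqrt_nonneg X).posSemidef.isHermitian
  have hT : (CFC.sqrt Y)ᴴ = CFC.sqrt Y := (CFC.sqrt_nonneg Y).posSemidef.isHermitian
  conv_lhs => rw [← CFC.sqrt_mul_sqrt_self X hX.nonneg, ← CFC.sqrt_mul_sqrt_self Y hY.nonneg]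
  simp only [conjTranspose_mul, hS, hT, hC.eq, Matrix.mul_assoc]
  rw [trace_mul_comm]
  simp only [Matrix.mul_assoc]

lemma PosSemidef.trace_mul_mul_mul_nonneg (hX : X.PosSemidef) (hY : Y.PosSemidef)
    (hC : C.IsHermitian) : 0 ≤ (X * C * Y * C).trace := by
  rw [trace_mul_mul_mul_eq_trace_mul_conjTranspose hX hY hC]
  exact (posSemidef_self_mul_conjTranspose _).trace_nonneg

lemma PosDef.trace_mul_mul_mul_pos (hX : X.PosDef) (hY : Y.PosDef) (hC : C.IsHermitian)
    (hC0 : C ≠ 0) : 0 < (X * C * Y * C).trace := by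
  have hS : IsUnit (CFC.sqrt X) := isUnit_of_mul_isUnit_left
    ((CFC.sqrt_mul_sqrt_self X hX.posSemidef.nonneg).symm ▸ hX.isUnit)
  have hT : IsUnit (CFC.sqrt Y) := isUnit_of_mul_isUnit_left
    ((CFC.sqrt_mul_sqrt_self Y hY.posSemidef.nonneg).symm ▸ hY.isUnit)
  refine (hX.posSemidef.trace_mul_mul_mul_nonneg hY.posSemidef hC).lt_of_ne' ?_
  rw [trace_mul_mul_mul_eq_trace_mul_conjTranspose hX.posSemidef hY.posSemidef hC, Ne,
    trace_mul_conjTranspose_self_eq_zero_iff, hT.mul_left_eq_zero,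
    hS.mul_right_eq_zero]
  exact hC0

end Matrix

theorem Finset.sum_sum_eq_two_nsmul_sum_sum_filter_lt {ι M : Type*} [Fintype ι] [LinearOrder ι]
    [AddCommMonoid M] (g : ι → ι → M) (hg : ∀ p q, g p q = g q p) (hdiag : ∀ p, g p p = 0) :
    ∑ p, ∑ q, g p q = 2 • ∑ p, ∑ q with p < q, g p q := by
  have hsplit : ∀ p q, g p q = (if p < q then g p q else 0) + (if q < p then g q p else 0) := by
    intro p q
    rcases lt_trichotomy p q with h | rfl | h
    · simp [h, h.not_gt]
    · simp [hdiag]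
    · simp [h, h.not_gt, hg p q]
  simp_rw [two_nsmul, sum_filter]
  conv_lhs => enter [2, p, 2, q]; rw [hsplit p q]
  simp only [sum_add_distrib]
  rw [sum_comm (f := fun p q => if q < p then g q p else 0)]

def PosReachable {ι : Type*} (A : ι → ι → ℝ) (p q : ι) : Prop :=
  ∃ (m : ℕ) (path : Fin (m + 1) → ι), path 0 = p ∧ path (Fin.last m) = q ∧
    ∀ i : Fin m, 0 < A (path i.castSucc) (path i.succ)

namespace PosReachable

variable {ι : Type*} {A : ι → ι → ℝ} {p q s t : ι}

lemma refl (A : ι → ι → ℝ) (p : ι) : PosReachable A p p :=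
  ⟨0, fun _ => p, rfl, rfl, fun i => i.elim0⟩

lemma tail (h : PosReachable A p s) (hst : 0 < A s t) : PosReachable A p t := by
  obtain ⟨m, path, h0, hlast, hpos⟩ := h
  refine ⟨m + 1, Fin.snoc path t, by simpa using h0, by simp, Fin.lastCases ?_ fun i => ?_⟩
  · simpa [Fin.succ_last, hlast] using hst
  · rw [Fin.succ_castSucc, Fin.snoc_castSucc, Fin.snoc_castSucc]
    exact hpos i

lemma exists_pos_of_ne {β : Type*} (h : PosReachable A p q) (f : ι → β) (hf : f p ≠ f q) :
    ∃ u v, 0 < A u v ∧ f u ≠ f v := by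
  obtain ⟨m, path, rfl, rfl, hpos⟩ := h
  by_contra! hc
  exact hf <| Fin.induction (motive := fun j => f (path 0) = f (path j)) rfl
    (fun i hi => hi.trans (hc _ _ (hpos i))) (Fin.last m)

end PosReachable

section ScalarForm

variable {ι : Type*} [Fintype ι] {A : ι → ι → ℝ} {w m : ι → ℝ}

def scalarForm (A : ι → ι → ℝ) (w m : ι → ℝ) : ℝ :=
  ∑ p, ∑ q, A p q * (w p * w q * (m p - m q) ^ 2)

lemma scalarForm_div (A : ι → ι → ℝ) (w m : ι → ℝ) (c : ℝ) :
    scalarForm A (fun p => w p / c) m = scalarForm A w m / c ^ 2 := by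
  simp only [scalarForm, sum_div]
  refine sum_congr rfl fun p _ => sum_congr rfl fun q _ => ?_
  ring

lemma scalarForm_eq_zero (h : ∀ u v, m u ≠ m v → A u v = 0) : scalarForm A w m = 0 :=
  sum_eq_zero fun u _ => sum_eq_zero fun v _ => by
    by_cases huv : m u = m v
    · simp [huv]
    · simp [h u v huv]

lemma scalarForm_nonneg_of_forall_pos (h : ∀ w, (∀ p, 0 < w p) → 0 < scalarForm A w m)
    (hw : ∀ p, 0 ≤ w p) : 0 ≤ scalarForm A w m := by
  have hcont : Continuous fun ε : ℝ => scalarForm A (fun p => w p + ε) m := by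
    unfold scalarForm; fun_prop
  have hlim := (hcont.tendsto 0).mono_left (nhdsWithin_le_nhds (s := Set.Ioi 0))
  simpa using ge_of_tendsto hlim <| eventually_nhdsWithin_of_forall fun ε (hε : 0 < ε) =>
    (h _ fun p => add_pos_of_nonneg_of_pos (hw p) hε).le

lemma scalarForm_indicator_pair [DecidableEq ι] {s t : ι} (hst : s ≠ t) :
    scalarForm A (fun r => if r = s ∨ r = t then 1 else 0) (Pi.single s 1) = A s t + A t s := by
  unfold scalarForm
  rw [Fintype.sum_eq_add s t hst fun r hr => by simp [hr.1, hr.2]]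
  rw [Fintype.sum_eq_add s t hst fun r hr => by simp [hr.1, hr.2],
    Fintype.sum_eq_add s t hst fun r hr => by simp [hr.1, hr.2]]
  simp [hst, hst.symm]

end ScalarForm

section Criterion

variable {ι : Type*} [Fintype ι] {A : ι → ι → ℝ} {o : ι}

lemma nonneg_of_scalarForm_pos [DecidableEq ι] (hA : ∀ p q, A p q = A q p)
    (h : ∀ w m, (∀ p, 0 < w p) → m o = 0 → m ≠ 0 → 0 < scalarForm A w m) :
    ∀ s t, s ≠ t → 0 ≤ A s t := by
  intro s t hst
  wlog hs : s ≠ o generalizing s t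
  · rw [hA]
    exact this t s hst.symm fun ht => hst ((not_ne_iff.mp hs).trans ht.symm)
  have hpair := scalarForm_nonneg_of_forall_pos (m := Pi.single s 1)
    (fun w hw => h w _ hw (Pi.single_eq_of_ne' hs _) fun h0 => by simpa using congrFun h0 s)
    (w := fun r => if r = s ∨ r = t then 1 else 0) (fun r => by positivity)
  rw [scalarForm_indicator_pair hst, hA t s] at hpair
  linarith

lemma posReachable_of_scalarForm_pos (hA : ∀ p q, A p q = A q p)
    (hnonneg : ∀ s t, s ≠ t → 0 ≤ A s t)
    (h : ∀ w m, (∀ p, 0 < w p) → m o = 0 → m ≠ 0 → 0 < scalarForm A w m) (p q : ι) :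
    PosReachable A p q := by
  classical
  by_contra hpq
  have hcut : ∀ u v, PosReachable A p u → ¬ PosReachable A p v → A u v = 0 :=
    fun u v hu hv => le_antisymm (not_lt.mp fun huv => hv (hu.tail huv))
      (hnonneg u v (by rintro rfl; exact hv hu))
  -- the indicator of the component of `p` or of its complement, whichever misses `o`
  set m : ι → ℝ := fun r => if (PosReachable A p r ↔ PosReachable A p o) then 0 else 1
  have hm0 : m ≠ 0 := by
    intro h0
    have hp := congrFun h0 p
    have hq := congrFun h0 q
    simp [m, PosReachable.refl, hpq] at hp hq
    exact hq hp
  have hzero : scalarForm A (fun _ => 1) m = 0 := by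
    refine scalarForm_eq_zero fun u v huv => ?_
    by_cases hu : PosReachable A p u <;> by_cases hv : PosReachable A p v
    · simp [m, hu, hv] at huv
    · exact hcut u v hu hv
    · rw [hA]; exact hcut v u hv hu
    · simp [m, hu, hv] at huv
  exact (h _ m (fun _ => one_pos) (by simp [m]) hm0).ne' hzero

end Criterion

section MatrixSimplex

variable {n d : ℕ} {Z Λ : Fin n → Matrix (Fin d) (Fin d) ℂ}

lemma posDef_Zext9 (hZ : ∀ k, (Z k).PosDef) (hZ' : (1 - ∑ k, Z k).PosDef) (p : Fin (n + 1)) :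
    (Zext9 Z p).PosDef :=
  p.lastCases (by simpa [Zext9] using hZ') fun k => by simpa [Zext9] using hZ k

lemma isHermitian_Lext9 (hΛ : ∀ k, (Λ k).IsHermitian) (p : Fin (n + 1)) :
    (Lext9 Λ p).IsHermitian :=
  p.lastCases (by simp [Lext9]) fun k => by simpa [Lext9] using hΛ k

lemma Qform9_of_smul_one {A : Fin (n + 1) → Fin (n + 1) → ℝ}
    (hA : ∀ p q, A p q = A q p) {w m : Fin (n + 1) → ℝ}
    (hZ : ∀ p, Zext9 Z p = (w p : ℂ) • 1) (hΛ : ∀ p, Lext9 Λ p = (m p : ℂ) • 1) :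
    Qform9 A Z Λ = ((d * scalarForm A w m : ℝ) : ℂ) := by
  have hterm : ∀ p q, (A p q : ℂ) *
      ((Zext9 Z q * ((Lext9 Λ p - Lext9 Λ q).map (starRingEnd ℂ))
          * Zext9 Z p * ((Lext9 Λ p - Lext9 Λ q).map (starRingEnd ℂ))).trace
        + (Zext9 Z p * ((Lext9 Λ p - Lext9 Λ q).map (starRingEnd ℂ))
          * Zext9 Z q * ((Lext9 Λ p - Lext9 Λ q).map (starRingEnd ℂ))).trace)
      = ((2 * d * (A p q * (w p * w q * (m p - m q) ^ 2)) : ℝ) : ℂ) := by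
    intro p q
    have hC : (Lext9 Λ p - Lext9 Λ q).map (starRingEnd ℂ) = ((m p - m q : ℝ) : ℂ) • 1 := by
      rw [hΛ, hΛ, ← sub_smul, ← Complex.ofReal_sub]
      ext i j
      by_cases h : i = j <;> simp [h, one_apply]
    simp only [hC, hZ, smul_mul_smul, Matrix.one_mul, trace_smul, trace_one, smul_eq_mul,
      Fintype.card_fin]
    push_cast
    ring
  have hsum := sum_sum_eq_two_nsmul_sum_sum_filter_lt
    (fun p q => A p q * (w p * w q * (m p - m q) ^ 2)) (fun p q => by rw [hA]; ring)
    (fun p => by ring)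
  simp only [Qform9, hterm, scalarForm, hsum, nsmul_eq_mul, mul_sum]
  push_cast
  exact sum_congr rfl fun p _ => sum_congr rfl fun q _ => by ring

lemma Qform9_pos {A : Fin (n + 1) → Fin (n + 1) → ℝ} (hA : ∀ p q, A p q = A q p)
    (hnonneg : ∀ p q, p ≠ q → 0 ≤ A p q) (hZ : ∀ p, (Zext9 Z p).PosDef)
    (hΛ : ∀ p, (Lext9 Λ p).IsHermitian) {u v : Fin (n + 1)} (huv : 0 < A u v)
    (hL : Lext9 Λ u ≠ Lext9 Λ v) : 0 < Qform9 A Z Λ := by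
  wlog hlt : u < v generalizing u v
  · exact this (by rwa [hA]) hL.symm
      ((not_lt.mp hlt).lt_of_ne fun h => hL (congrArg (Lext9 Λ) h.symm))
  have hC : ∀ p q, ((Lext9 Λ p - Lext9 Λ q).map (starRingEnd ℂ)).IsHermitian := fun p q => by
    rw [((hΛ p).sub (hΛ q)).map_starRingEnd]
    exact ((hΛ p).sub (hΛ q)).transpose
  have hterm : ∀ p q, p < q → 0 ≤ (A p q : ℂ) *
      ((Zext9 Z q * ((Lext9 Λ p - Lext9 Λ q).map (starRingEnd ℂ))
          * Zext9 Z p * ((Lext9 Λ p - Lext9 Λ q).map (starRingEnd ℂ))).trace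
        + (Zext9 Z p * ((Lext9 Λ p - Lext9 Λ q).map (starRingEnd ℂ))
          * Zext9 Z q * ((Lext9 Λ p - Lext9 Λ q).map (starRingEnd ℂ))).trace) :=
    fun p q hpq => mul_nonneg (Complex.zero_le_real.mpr (hnonneg p q hpq.ne)) <| add_nonneg
      ((hZ q).posSemidef.trace_mul_mul_mul_nonneg (hZ p).posSemidef (hC p q))
      ((hZ p).posSemidef.trace_mul_mul_mul_nonneg (hZ q).posSemidef (hC p q))
  have hCuv : (Lext9 Λ u - Lext9 Λ v).map (starRingEnd ℂ) ≠ 0 := by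
    rw [((hΛ u).sub (hΛ v)).map_starRingEnd, Ne, transpose_eq_zero, sub_eq_zero]
    exact hL
  refine sum_pos' (fun p _ => sum_nonneg fun q hq => hterm p q (mem_filter.mp hq).2)
    ⟨u, mem_univ u, sum_pos' (fun q hq => hterm u q (mem_filter.mp hq).2)
      ⟨v, mem_filter.mpr ⟨mem_univ v, hlt⟩, ?_⟩⟩
  exact mul_pos (Complex.zero_lt_real.mpr huv) <| add_pos
    ((hZ v).trace_mul_mul_mul_pos (hZ u) (hC u v) hCuv)
    ((hZ u).trace_mul_mul_mul_pos (hZ v) (hC u v) hCuv)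

lemma scalarForm_pos_of_Qform9_pos (hd : 1 ≤ d) {A : Fin (n + 1) → Fin (n + 1) → ℝ}
    (hA : ∀ p q, A p q = A q p)
    (H : ∀ Z : Fin n → Matrix (Fin d) (Fin d) ℂ,
        (∀ k, (Z k).PosDef) → (1 - ∑ k, Z k).PosDef →
        ∀ Λ : Fin n → Matrix (Fin d) (Fin d) ℂ,
          (∀ k, (Λ k).IsHermitian) → (∃ k, Λ k ≠ 0) →
          ∃ r : ℝ, 0 < r ∧ Qform9 A Z Λ = (r : ℂ))
    {w m : Fin (n + 1) → ℝ} (hw : ∀ p, 0 < w p) (hm : m (Fin.last n) = 0) (hm0 : m ≠ 0) :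
    0 < scalarForm A w m := by
  have : NeZero d := ⟨by omega⟩
  set c := ∑ p, w p
  have hc : 0 < c := sum_pos (fun p _ => hw p) univ_nonempty
  set Z : Fin n → Matrix (Fin d) (Fin d) ℂ := fun k => ((w k.castSucc / c : ℝ) : ℂ) • 1
  set Λ : Fin n → Matrix (Fin d) (Fin d) ℂ := fun k => (m k.castSucc : ℂ) • 1
  have hZ : ∀ p, Zext9 Z p = ((w p / c : ℝ) : ℂ) • 1 := by
    refine Fin.lastCases ?_ fun k => by simp [Zext9, Z]
    have hlast : w (Fin.last n) / c = 1 - ∑ k : Fin n, w k.castSucc / c := by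
      rw [← sum_div, eq_sub_iff_add_eq, ← add_div, add_comm, ← Fin.sum_univ_castSucc,
        div_self hc.ne']
    simp only [Zext9, Z, Fin.snoc_last, hlast, Complex.ofReal_sub, Complex.ofReal_one,
      Complex.ofReal_sum, sub_smul, one_smul, sum_smul]
  have hΛ : ∀ p, Lext9 Λ p = (m p : ℂ) • 1 :=
    Fin.lastCases (by simp [Lext9, hm]) fun k => by simp [Lext9, Λ]
  have hZpos : ∀ p, (Zext9 Z p).PosDef := fun p => by
    rw [hZ]
    exact PosDef.one.smul (Complex.zero_lt_real.mpr (div_pos (hw p) hc))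
  have hΛne : ∃ k, Λ k ≠ 0 := by
    obtain ⟨p, hp⟩ : ∃ p, m p ≠ 0 := Function.ne_iff.mp hm0
    obtain ⟨k, rfl⟩ := Fin.exists_castSucc_eq.mpr fun (h : p = Fin.last n) => hp (by rw [h, hm])
    exact ⟨k, smul_ne_zero (Complex.ofReal_ne_zero.mpr hp) one_ne_zero⟩
  obtain ⟨r, hr, hQ⟩ := H Z (fun k => by simpa [Zext9] using hZpos k.castSucc)
    (by simpa [Zext9] using hZpos (Fin.last n)) Λ
    (fun k => by simp [IsHermitian, Λ, conjTranspose_smul]) hΛne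
  rw [Qform9_of_smul_one hA hZ hΛ, Complex.ofReal_inj, scalarForm_div] at hQ
  have hpos : 0 < (d : ℝ) * (scalarForm A w m / c ^ 2) := hQ ▸ hr
  exact (div_pos_iff_of_pos_right (by positivity)).mp (pos_of_mul_pos_right hpos d.cast_nonneg)

end MatrixSimplex

theorem stmt_9_general (n d : ℕ) (hd : 1 ≤ d)
    (A : Fin (n + 1) → Fin (n + 1) → ℝ)
    (hsymm : ∀ p q, A p q = A q p) :
    (∀ Z : Fin n → Matrix (Fin d) (Fin d) ℂ,
        (∀ k, (Z k).PosDef) → (1 - ∑ k, Z k).PosDef →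
        ∀ Λ : Fin n → Matrix (Fin d) (Fin d) ℂ,
          (∀ k, (Λ k).IsHermitian) → (∃ k, Λ k ≠ 0) →
          ∃ r : ℝ, 0 < r ∧ Qform9 A Z Λ = (r : ℂ))
    ↔ ((∀ p q, p ≠ q → 0 ≤ A p q)
        ∧ ∀ p q : Fin (n + 1), p ≠ q →
            ∃ (m : ℕ) (path : Fin (m + 1) → Fin (n + 1)),
              path 0 = p ∧ path (Fin.last m) = q ∧
              ∀ i : Fin m, 0 < A (path i.castSucc) (path i.succ)) := by
  constructor
  · intro H
    have hscalar := fun w m => scalarForm_pos_of_Qform9_pos hd hsymm H (w := w) (m := m)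
    have hnonneg := nonneg_of_scalarForm_pos hsymm hscalar
    exact ⟨hnonneg, fun p q _ => posReachable_of_scalarForm_pos hsymm hnonneg hscalar p q⟩
  · rintro ⟨hnonneg, hirr⟩ Z hZ hZ' Λ hΛ ⟨k, hk⟩
    have hL : Lext9 Λ k.castSucc ≠ Lext9 Λ (Fin.last n) := by simpa [Lext9] using hk
    obtain ⟨u, v, huv, hLuv⟩ :=
      PosReachable.exists_pos_of_ne (hirr _ _ (Fin.castSucc_lt_last k).ne) (Lext9 Λ) hL
    obtain ⟨r, hr, hQ⟩ := RCLike.pos_iff_exists_ofReal.mp <|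
      Qform9_pos hsymm hnonneg (posDef_Zext9 hZ hZ') (isHermitian_Lext9 hΛ) huv hLuv
    exact ⟨r, hr, hQ.symm⟩

/-- Ellipticity criterion for the first matrix Dirichlet model: the quadratic
form `Q_Z(Λ)` is a positive real number for every interior point `Z` of the matrix simplex
and every nonzero Hermitian tuple `Λ` if and only if `A` has nonnegative off-diagonal
entries and is irreducible. -/
theorem stmt_9 (n d : ℕ) (hn : 1 ≤ n) (hd : 1 ≤ d)
    (A : Fin (n + 1) → Fin (n + 1) → ℝ)
    (hsymm : ∀ p q, A p q = A q p) :
    (∀ Z : Fin n → Matrix (Fin d) (Fin d) ℂ,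
        (∀ k, (Z k).PosDef) → (1 - ∑ k, Z k).PosDef →
        ∀ Λ : Fin n → Matrix (Fin d) (Fin d) ℂ,
          (∀ k, (Λ k).IsHermitian) → (∃ k, Λ k ≠ 0) →
          ∃ r : ℝ, 0 < r ∧ Qform9 A Z Λ = (r : ℂ))
    ↔ ((∀ p q, p ≠ q → 0 ≤ A p q)
        ∧ ∀ p q : Fin (n + 1), p ≠ q →
            ∃ (m : ℕ) (path : Fin (m + 1) → Fin (n + 1)),
              path 0 = p ∧ path (Fin.last m) = q ∧
              ∀ i : Fin m, 0 < A (path i.castSucc) (path i.succ)) :=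
  stmt_9_general n d hd A hsymm
end

section
/- Let n ≥ 1, d ≥ 1, let A be a symmetric (n+1)×(n+1) real matrix, let Z^(1), …, Z^(n) be d×d Hermitian complex matrices, and set Z^(n+1) := Id − Σ_{k=1}^n Z^(k). For 1 ≤ p ≤ n and 1 ≤ q ≤ n+1 define Γ_A(Z^(p)_{ij}, Z^(q)_{kl}) := δ_{pq} Σ_{s=1}^{n+1} A_{sp}(Z^(s)_{il} Z^(p)_{kj} + Z^(s)_{kj} Z^(p)_{il}) − A_{pq}(Z^(q)_{il} Z^(p)_{kj} + Z^(p)_{il} Z^(q)_{kj}). Then for every q with Z^(q) invertible and all 1 ≤ i,j ≤ d: Σ_{k,l=1}^d ((Z^(q))^{-1})_{lk} · Γ_A(Z^(p)_{ij}, Z^(q)_{kl}) = 2 δ_{pq} Σ_{s=1}^{n+1} A_{sp} Z^(s)_{ij} − 2 A_{pq} Z^(p)_{ij}. In particular for q = n+1 the left-hand side equals −2 A_{p,n+1} Z^(p)_{ij}. -/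
open Finset Matrix

/-- The tuple `(Z^(1),…,Z^(n))` extended by `Z^(n+1) = Id - Σ Z^(k)`. -/
noncomputable def W10 {n d : ℕ} (Z : Fin n → Matrix (Fin d) (Fin d) ℂ) :
    Fin (n + 1) → Matrix (Fin d) (Fin d) ℂ :=
  Fin.snoc Z (1 - ∑ k, Z k)

/-- The co-metric `Γ_A(Z^(p)_{ij}, Z^(q)_{kl})` of the first matrix Dirichlet model, for
`1 ≤ p ≤ n` and `1 ≤ q ≤ n+1`. -/
noncomputable def Gamma10 {n d : ℕ} (A : Fin (n + 1) → Fin (n + 1) → ℝ)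
    (Z : Fin n → Matrix (Fin d) (Fin d) ℂ)
    (p : Fin n) (q : Fin (n + 1)) (i j k l : Fin d) : ℂ :=
  (if p.castSucc = q then
    ∑ s : Fin (n + 1), (A s p.castSucc : ℂ) *
      (W10 Z s i l * W10 Z p.castSucc k j + W10 Z s k j * W10 Z p.castSucc i l)
  else 0)
  - (A p.castSucc q : ℂ) * (W10 Z q i l * W10 Z p.castSucc k j
      + W10 Z p.castSucc i l * W10 Z q k j)

/-! Contracting against `N` turns `X i l * Y k j` into `(X * N * Y) i j`, so every term of `Γ_A`
is a matrix product `X * N * Y` in which one of `X`, `Y` is `Z^(q)`; for `N = (Z^(q))⁻¹` that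
factor cancels. -/

namespace Matrix

variable {m n o p R : Type*} [Fintype n] [Fintype o] [CommSemiring R]

theorem sum_sum_apply_mul_apply_mul_apply (N : Matrix n o R) (X : Matrix m n R)
    (Y : Matrix o p R) (i : m) (j : p) :
    ∑ k, ∑ l, N l k * (X i l * Y k j) = (X * N * Y) i j := by
  simp only [mul_apply, Finset.sum_mul]
  exact Finset.sum_congr rfl fun l _ => Finset.sum_congr rfl fun k _ => by ring

theorem sum_sum_apply_mul_symm (N X Y : Matrix n n R) (i j : n) :
    ∑ k, ∑ l, N l k * (X i l * Y k j + X k j * Y i l) = (X * N * Y + Y * N * X) i j := by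
  simp only [mul_add, Finset.sum_add_distrib, add_apply,
    ← sum_sum_apply_mul_apply_mul_apply]
  congr 1
  exact Finset.sum_congr rfl fun l _ => Finset.sum_congr rfl fun k _ => by ring

end Matrix

theorem sum_sum_mul_Gamma10 {n d : ℕ} (A : Fin (n + 1) → Fin (n + 1) → ℝ)
    (Z : Fin n → Matrix (Fin d) (Fin d) ℂ) (p : Fin n) (q : Fin (n + 1))
    (N : Matrix (Fin d) (Fin d) ℂ) (i j : Fin d) :
    ∑ k, ∑ l, N l k * Gamma10 A Z p q i j k l
      = (if p.castSucc = q then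
          ∑ s, (A s q : ℂ) * (W10 Z s * N * W10 Z q + W10 Z q * N * W10 Z s) i j
        else 0)
        - (A p.castSucc q : ℂ) *
          (W10 Z p.castSucc * N * W10 Z q + W10 Z q * N * W10 Z p.castSucc) i j := by
  simp only [← Matrix.sum_sum_apply_mul_symm]
  split_ifs with hpq
  · subst hpq
    simp only [Gamma10, if_true, Finset.mul_sum, mul_sub, Finset.sum_sub_distrib]
    congr 1
    · conv_rhs => rw [Finset.sum_comm]; arg 2; ext k; rw [Finset.sum_comm]
      exact Finset.sum_congr rfl fun k _ => Finset.sum_congr rfl fun l _ =>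
        Finset.sum_congr rfl fun s _ => by ring
    · exact Finset.sum_congr rfl fun k _ => Finset.sum_congr rfl fun l _ => by ring
  · simp only [Gamma10, if_neg hpq, zero_sub, Finset.mul_sum, mul_neg, Finset.sum_neg_distrib,
      neg_inj]
    exact Finset.sum_congr rfl fun k _ => Finset.sum_congr rfl fun l _ => by ring

theorem stmt_10_general (n d : ℕ)
    (A : Fin (n + 1) → Fin (n + 1) → ℝ)
    (Z : Fin n → Matrix (Fin d) (Fin d) ℂ)
    (p : Fin n) (q : Fin (n + 1))
    (hq : IsUnit (W10 Z q))
    (i j : Fin d) :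
    ∑ k : Fin d, ∑ l : Fin d, (W10 Z q)⁻¹ l k * Gamma10 A Z p q i j k l
      = 2 * (if p.castSucc = q then
              ∑ s : Fin (n + 1), (A s p.castSucc : ℂ) * W10 Z s i j
            else 0)
        - 2 * (A p.castSucc q : ℂ) * W10 Z p.castSucc i j := by
  have hdet : IsUnit (W10 Z q).det := (isUnit_iff_isUnit_det _).mp hq
  rw [sum_sum_mul_Gamma10]
  simp only [Matrix.mul_assoc, nonsing_inv_mul _ hdet, mul_nonsing_inv _ hdet, Matrix.mul_one,
    Matrix.one_mul, Matrix.add_apply, ← two_mul, mul_left_comm _ (2 : ℂ), ← Finset.mul_sum]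
  split_ifs with hpq
  · subst hpq
    ring
  · ring

/-- The boundary-equation contraction for the first matrix Dirichlet model:
`Σ_{k,l} ((Z^(q))⁻¹)_{lk} Γ_A(Z^(p)_{ij}, Z^(q)_{kl})
   = 2 δ_{pq} Σ_s A_{sp} Z^(s)_{ij} - 2 A_{pq} Z^(p)_{ij}`. -/
theorem stmt_10 (n d : ℕ) (hn : 1 ≤ n) (hd : 1 ≤ d)
    (A : Fin (n + 1) → Fin (n + 1) → ℝ)
    (hsymm : ∀ p q, A p q = A q p)
    (Z : Fin n → Matrix (Fin d) (Fin d) ℂ)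
    (hherm : ∀ k, (Z k).IsHermitian)
    (p : Fin n) (q : Fin (n + 1))
    (hq : IsUnit (W10 Z q))
    (i j : Fin d) :
    ∑ k : Fin d, ∑ l : Fin d, (W10 Z q)⁻¹ l k * Gamma10 A Z p q i j k l
      = 2 * (if p.castSucc = q then
              ∑ s : Fin (n + 1), (A s p.castSucc : ℂ) * W10 Z s i j
            else 0)
        - 2 * (A p.castSucc q : ℂ) * W10 Z p.castSucc i j :=
  stmt_10_general n d A Z p q hq i j
end

section
/- Let n ≥ 1, d ≥ 1, let A be a d×d complex matrix and B a complex array indexed by (ia, lb) with 1 ≤ i,a,l,b ≤ d. Let Z^(1), …, Z^(n) be d×d Hermitian complex matrices and set Z^(n+1) := Id − Σ_{k=1}^n Z^(k). For 1 ≤ p, q ≤ n define Γ_{A,B}(Z^(p)_{ij}, Z^(q)_{kl}) := δ_{pq}(A_{il} Z^(p)_{kj} + A_{kj} Z^(p)_{il}) − A_{kj}(Z^(p) Z^(q))_{il} − A_{il}(Z^(q) Z^(p))_{kj} + Σ_{a,b=1}^d [ B_{ia,lb} Z^(p)_{aj} Z^(q)_{kb} + B_{aj,bk} Z^(p)_{ia}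 Z^(q)_{bl} − B_{aj,lb} Z^(p)_{ia} Z^(q)_{kb} − B_{ia,bk} Z^(p)_{aj} Z^(q)_{bl} ], and define Γ_{A,B}(Z^(p)_{ij}, Z^(n+1)_{kl}) := −Σ_{q=1}^n Γ_{A,B}(Z^(p)_{ij}, Z^(q)_{kl}). Then for every 1 ≤ p ≤ n and 1 ≤ q ≤ n+1 with Z^(q) invertible, and all 1 ≤ i,j ≤ d: Σ_{k,l=1}^d ((Z^(q))^{-1})_{lk} · Γ_{A,B}(Z^(p)_{ij}, Z^(q)_{kl}) = 2 δ_{pq} A_{ij} − (A Z^(p))_{ij} − (Z^(p) A)_{ij}. -/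
open Finset Matrix

/-- The tuple `(Z^(1),…,Z^(n))` extended by `Z^(n+1) = Id - Σ Z^(k)`. -/
noncomputable def W11 {n d : ℕ} (Z : Fin n → Matrix (Fin d) (Fin d) ℂ) :
    Fin (n + 1) → Matrix (Fin d) (Fin d) ℂ :=
  Fin.snoc Z (1 - ∑ k, Z k)

/-- The co-metric `Γ_{A,B}(Z^(p)_{ij}, Z^(q)_{kl})` of the second matrix Dirichlet model,
for `1 ≤ p, q ≤ n`. -/
noncomputable def Gamma11 {n d : ℕ} (A : Matrix (Fin d) (Fin d) ℂ)
    (B : Fin d → Fin d → Fin d → Fin d → ℂ)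
    (Z : Fin n → Matrix (Fin d) (Fin d) ℂ)
    (p q : Fin n) (i j k l : Fin d) : ℂ :=
  (if p = q then A i l * Z p k j + A k j * Z p i l else 0)
    - A k j * (Z p * Z q) i l - A i l * (Z q * Z p) k j
    + ∑ a : Fin d, ∑ b : Fin d,
        (B i a l b * Z p a j * Z q k b + B a j b k * Z p i a * Z q b l
          - B a j l b * Z p i a * Z q k b - B i a b k * Z p a j * Z q b l)

/-- The co-metric of the second model extended to `1 ≤ q ≤ n+1` by
`Γ_{A,B}(Z^(p)_{ij}, Z^(n+1)_{kl}) := - Σ_{q=1}^n Γ_{A,B}(Z^(p)_{ij}, Z^(q)_{kl})`. -/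
noncomputable def Gamma11ext {n d : ℕ} (A : Matrix (Fin d) (Fin d) ℂ)
    (B : Fin d → Fin d → Fin d → Fin d → ℂ)
    (Z : Fin n → Matrix (Fin d) (Fin d) ℂ)
    (p : Fin n) (q : Fin (n + 1)) (i j k l : Fin d) : ℂ :=
  if h : (q : ℕ) < n then Gamma11 A B Z p ⟨q, h⟩ i j k l
  else -∑ q' : Fin n, Gamma11 A B Z p q' i j k l

variable {d : ℕ}

lemma swapA (f : Fin d → Fin d → Fin d → Fin d → ℂ) :
    ∑ k, ∑ l, ∑ a, ∑ b, f k l a b = ∑ a, ∑ l, ∑ b, ∑ k, f k l a b := by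
  rw [Finset.sum_comm]
  rw [show (∑ l, ∑ k, ∑ a, ∑ b, f k l a b) = ∑ l, ∑ a, ∑ k, ∑ b, f k l a b from
    Finset.sum_congr rfl fun l _ => Finset.sum_comm]
  rw [Finset.sum_comm]
  exact Finset.sum_congr rfl fun a _ => Finset.sum_congr rfl fun l _ => Finset.sum_comm

lemma swapB (f : Fin d → Fin d → Fin d → Fin d → ℂ) :
    ∑ k, ∑ l, ∑ a, ∑ b, f k l a b = ∑ a, ∑ b, ∑ k, ∑ l, f k l a b := by
  rw [swapA]
  refine Finset.sum_congr rfl fun a _ => ?_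
  rw [Finset.sum_comm]
  exact Finset.sum_congr rfl fun b _ => Finset.sum_comm

lemma LA (M A Y : Matrix (Fin d) (Fin d) ℂ) (i j : Fin d) :
    ∑ k : Fin d, ∑ l : Fin d, M l k * (A i l * Y k j) = (A * M * Y) i j := by
  simp only [Matrix.mul_apply, Finset.mul_sum, Finset.sum_mul]
  exact Finset.sum_congr rfl fun k _ => Finset.sum_congr rfl fun l _ => by ring

lemma LB (M A X : Matrix (Fin d) (Fin d) ℂ) (i j : Fin d) :
    ∑ k : Fin d, ∑ l : Fin d, M l k * (A k j * X i l) = (X * (M * A)) i j := by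
  simp only [Matrix.mul_apply, Finset.mul_sum, Finset.sum_mul]
  rw [Finset.sum_comm]
  exact Finset.sum_congr rfl fun l _ => Finset.sum_congr rfl fun k _ => by ring

lemma LC1 (M Zp Zq : Matrix (Fin d) (Fin d) ℂ) (B : Fin d → Fin d → Fin d → Fin d → ℂ)
    (i j : Fin d) :
    ∑ k : Fin d, ∑ l : Fin d, M l k * (∑ a : Fin d, ∑ b : Fin d, B i a l b * Zp a j * Zq k b)
      = ∑ a : Fin d, ∑ x : Fin d, ∑ y : Fin d, B i a x y * Zp a j * (M * Zq) x y := by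
  simp only [Finset.mul_sum, Matrix.mul_apply]
  rw [swapA fun k l a b => M l k * (B i a l b * Zp a j * Zq k b)]
  refine Finset.sum_congr rfl fun a _ => Finset.sum_congr rfl fun x _ =>
    Finset.sum_congr rfl fun y _ => ?_
  exact Finset.sum_congr rfl fun k _ => by ring

lemma LC2 (M Zp Zq : Matrix (Fin d) (Fin d) ℂ) (B : Fin d → Fin d → Fin d → Fin d → ℂ)
    (i j : Fin d) :
    ∑ k : Fin d, ∑ l : Fin d, M l k * (∑ a : Fin d, ∑ b : Fin d, B a j b k * Zp i a * Zq b l)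
      = ∑ a : Fin d, ∑ x : Fin d, ∑ y : Fin d, B a j x y * Zp i a * (Zq * M) x y := by
  simp only [Finset.mul_sum, Matrix.mul_apply]
  rw [swapB fun k l a b => M l k * (B a j b k * Zp i a * Zq b l)]
  refine Finset.sum_congr rfl fun a _ => Finset.sum_congr rfl fun x _ =>
    Finset.sum_congr rfl fun y _ => ?_
  exact Finset.sum_congr rfl fun l _ => by ring

lemma LC3 (M Zp Zq : Matrix (Fin d) (Fin d) ℂ) (B : Fin d → Fin d → Fin d → Fin d → ℂ)
    (i j : Fin d) :
    ∑ k : Fin d, ∑ l : Fin d, M l k * (∑ a : Fin d, ∑ b : Fin d, B a j l b * Zp i a * Zq k b)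
      = ∑ a : Fin d, ∑ x : Fin d, ∑ y : Fin d, B a j x y * Zp i a * (M * Zq) x y := by
  simp only [Finset.mul_sum, Matrix.mul_apply]
  rw [swapA fun k l a b => M l k * (B a j l b * Zp i a * Zq k b)]
  refine Finset.sum_congr rfl fun a _ => Finset.sum_congr rfl fun x _ =>
    Finset.sum_congr rfl fun y _ => ?_
  exact Finset.sum_congr rfl fun k _ => by ring

lemma LC4 (M Zp Zq : Matrix (Fin d) (Fin d) ℂ) (B : Fin d → Fin d → Fin d → Fin d → ℂ)
    (i j : Fin d) :
    ∑ k : Fin d, ∑ l : Fin d, M l k * (∑ a : Fin d, ∑ b : Fin d, B i a b k * Zp a j * Zq b l)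
      = ∑ a : Fin d, ∑ x : Fin d, ∑ y : Fin d, B i a x y * Zp a j * (Zq * M) x y := by
  simp only [Finset.mul_sum, Matrix.mul_apply]
  rw [swapB fun k l a b => M l k * (B i a b k * Zp a j * Zq b l)]
  refine Finset.sum_congr rfl fun a _ => Finset.sum_congr rfl fun x _ =>
    Finset.sum_congr rfl fun y _ => ?_
  exact Finset.sum_congr rfl fun l _ => by ring
lemma contract {n : ℕ} (A : Matrix (Fin d) (Fin d) ℂ)
    (B : Fin d → Fin d → Fin d → Fin d → ℂ)
    (Z : Fin n → Matrix (Fin d) (Fin d) ℂ)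
    (p q' : Fin n) (M : Matrix (Fin d) (Fin d) ℂ) (i j : Fin d) :
    ∑ k : Fin d, ∑ l : Fin d, M l k * Gamma11 A B Z p q' i j k l =
      (if p = q' then (A * M * Z p) i j + (Z p * (M * A)) i j else 0)
        - ((Z p * Z q') * (M * A)) i j - ((A * M) * (Z q' * Z p)) i j
        + ∑ a : Fin d, ∑ x : Fin d, ∑ y : Fin d,
            (B i a x y * Z p a j - B a j x y * Z p i a)
              * ((M * Z q') x y - (Z q' * M) x y) := by
  rcases eq_or_ne p q' with hpq | hpq
  · subst hpq
    simp only [Gamma11, eq_self_iff_true, if_true, mul_sub, mul_add, Finset.sum_sub_distrib,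
      Finset.sum_add_distrib]
    rw [LA M A (Z p) i j, LB M A (Z p) i j, LB M A (Z p * Z p) i j, LA M A (Z p * Z p) i j,
      LC1 M (Z p) (Z p) B i j, LC2 M (Z p) (Z p) B i j, LC3 M (Z p) (Z p) B i j,
      LC4 M (Z p) (Z p) B i j]
    simp only [sub_mul, mul_sub, Finset.sum_sub_distrib]
    ring
  · simp only [Gamma11, if_neg hpq, mul_sub, mul_add, mul_neg, Finset.sum_sub_distrib,
      Finset.sum_add_distrib, Finset.sum_neg_distrib, zero_sub, mul_zero, Finset.sum_const_zero]
    rw [LB M A (Z p * Z q') i j, LA M A (Z q' * Z p) i j,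
      LC1 M (Z p) (Z q') B i j, LC2 M (Z p) (Z q') B i j, LC3 M (Z p) (Z q') B i j,
      LC4 M (Z p) (Z q') B i j]
    simp only [sub_mul, mul_sub, Finset.sum_sub_distrib]
    ring

lemma moveQ {m : ℕ} (f : Fin d → Fin d → Fin m → ℂ) :
    ∑ k, ∑ l, ∑ q', f k l q' = ∑ q', ∑ k, ∑ l, f k l q' := by
  rw [show (∑ k, ∑ l, ∑ q', f k l q') = ∑ k, ∑ q', ∑ l, f k l q' from
    Finset.sum_congr rfl fun k _ => Finset.sum_comm, Finset.sum_comm]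

lemma moveQ3 {m : ℕ} (f : Fin m → Fin d → Fin d → Fin d → ℂ) :
    ∑ q', ∑ a, ∑ x, ∑ y, f q' a x y = ∑ a, ∑ x, ∑ y, ∑ q', f q' a x y := by
  rw [Finset.sum_comm]
  refine Finset.sum_congr rfl fun a _ => ?_
  rw [Finset.sum_comm]
  exact Finset.sum_congr rfl fun x _ => Finset.sum_comm

/-- The boundary-equation contraction for the second matrix Dirichlet model:
`Σ_{k,l} ((Z^(q))⁻¹)_{lk} Γ_{A,B}(Z^(p)_{ij}, Z^(q)_{kl})
   = 2 δ_{pq} A_{ij} - (A Z^(p))_{ij} - (Z^(p) A)_{ij}`; in particular all the `B`-terms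
cancel after contraction. -/
theorem stmt_11 (n d : ℕ) (hn : 1 ≤ n) (hd : 1 ≤ d)
    (A : Matrix (Fin d) (Fin d) ℂ)
    (B : Fin d → Fin d → Fin d → Fin d → ℂ)
    (Z : Fin n → Matrix (Fin d) (Fin d) ℂ)
    (hherm : ∀ k, (Z k).IsHermitian)
    (p : Fin n) (q : Fin (n + 1))
    (hq : IsUnit (W11 Z q))
    (i j : Fin d) :
    ∑ k : Fin d, ∑ l : Fin d, (W11 Z q)⁻¹ l k * Gamma11ext A B Z p q i j k l
      = 2 * (if q = p.castSucc then 1 else 0) * A i j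
        - (A * Z p) i j - (Z p * A) i j := by
  by_cases h : (q : ℕ) < n
  · -- interior case
    have hW : W11 Z q = Z ⟨q, h⟩ := by
      have hcast : q = Fin.castSucc ⟨q, h⟩ := by
        rw [Fin.ext_iff]; simp
      conv_lhs => rw [hcast]
      rw [W11, Fin.snoc_castSucc]
    have hdet : IsUnit (Z ⟨(q : ℕ), h⟩).det :=
      (Matrix.isUnit_iff_isUnit_det _).mp (hW ▸ hq)
    have h1 : (Z ⟨(q : ℕ), h⟩)⁻¹ * Z ⟨(q : ℕ), h⟩ = 1 := Matrix.nonsing_inv_mul _ hdet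
    have h2 : Z ⟨(q : ℕ), h⟩ * (Z ⟨(q : ℕ), h⟩)⁻¹ = 1 := Matrix.mul_nonsing_inv _ hdet
    have hiff : (q = p.castSucc) ↔ (p = ⟨(q : ℕ), h⟩) := by
      rw [Fin.ext_iff, Fin.ext_iff]; simp; omega
    simp only [Gamma11ext, dif_pos h, hW]
    rw [contract A B Z p ⟨(q : ℕ), h⟩ ((Z ⟨(q : ℕ), h⟩)⁻¹) i j, h1, h2]
    have e1 : Z p * Z ⟨(q : ℕ), h⟩ * ((Z ⟨(q : ℕ), h⟩)⁻¹ * A) = Z p * A := by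
      rw [Matrix.mul_assoc, ← Matrix.mul_assoc (Z ⟨(q : ℕ), h⟩), h2, Matrix.one_mul]
    have e2 : A * (Z ⟨(q : ℕ), h⟩)⁻¹ * (Z ⟨(q : ℕ), h⟩ * Z p) = A * Z p := by
      rw [Matrix.mul_assoc, ← Matrix.mul_assoc ((Z ⟨(q : ℕ), h⟩)⁻¹), h1, Matrix.one_mul]
    rw [e1, e2]
    simp only [sub_self, mul_zero, Finset.sum_const_zero]
    by_cases hpq : p = (⟨(q : ℕ), h⟩ : Fin n)
    · rw [if_pos hpq, if_pos (hiff.mpr hpq)]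
      have e3 : A * (Z ⟨(q : ℕ), h⟩)⁻¹ * Z p = A := by
        rw [hpq, Matrix.mul_assoc, h1, Matrix.mul_one]
      have e4 : Z p * ((Z ⟨(q : ℕ), h⟩)⁻¹ * A) = A := by
        rw [hpq, ← Matrix.mul_assoc, h2, Matrix.one_mul]
      rw [e3, e4]
      ring
    · rw [if_neg hpq, if_neg (fun hc => hpq (hiff.mp hc))]
      ring
  · -- boundary case q = n
    have hlast : q = Fin.last n :=
      Fin.ext (le_antisymm (Nat.lt_succ_iff.mp q.isLt) (not_lt.mp h))
    subst hlast
    have hW : W11 Z (Fin.last n) = 1 - ∑ k, Z k := by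
      rw [W11, Fin.snoc_last]
    set M : Matrix (Fin d) (Fin d) ℂ := (W11 Z (Fin.last n))⁻¹ with hM
    set S : Matrix (Fin d) (Fin d) ℂ := ∑ k, Z k with hS
    have hdet : IsUnit (1 - S).det := (Matrix.isUnit_iff_isUnit_det _).mp (hW ▸ hq)
    have h1 : M * (1 - S) = 1 := by rw [hM, hW]; exact Matrix.nonsing_inv_mul _ hdet
    have h2 : (1 - S) * M = 1 := by rw [hM, hW]; exact Matrix.mul_nonsing_inv _ hdet
    have hMS : M * S = M - 1 := by
      have := h1; rw [Matrix.mul_sub, Matrix.mul_one] at this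
      linear_combination (norm := module) -this
    have hSM : S * M = M - 1 := by
      have := h2; rw [Matrix.sub_mul, Matrix.one_mul] at this
      linear_combination (norm := module) -this
    simp only [Gamma11ext, dif_neg h, mul_neg, Finset.mul_sum, Finset.sum_neg_distrib]
    rw [moveQ fun k l q' => M l k * Gamma11 A B Z p q' i j k l]
    rw [Finset.sum_congr rfl fun q' _ => contract A B Z p q' M i j]
    rw [Finset.sum_add_distrib, Finset.sum_sub_distrib, Finset.sum_sub_distrib,
      Finset.sum_ite_eq]
    simp only [Finset.mem_univ, if_true]
    have eB : ∑ q' : Fin n, ∑ a : Fin d, ∑ x : Fin d, ∑ y : Fin d,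
        (B i a x y * Z p a j - B a j x y * Z p i a) * ((M * Z q') x y - (Z q' * M) x y)
        = 0 := by
      rw [moveQ3]
      refine Finset.sum_eq_zero fun a _ => Finset.sum_eq_zero fun x _ =>
        Finset.sum_eq_zero fun y _ => ?_
      rw [← Finset.mul_sum, Finset.sum_sub_distrib]
      have : (∑ q' : Fin n, (M * Z q') x y) - ∑ q' : Fin n, (Z q' * M) x y = 0 := by
        rw [← Matrix.sum_apply, ← Matrix.sum_apply, ← Finset.mul_sum, ← Finset.sum_mul,
          ← hS, hMS, hSM, sub_self]
      rw [this, mul_zero]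
    rw [eB]
    have e1 : ∑ q' : Fin n, (Z p * Z q' * (M * A)) i j = (Z p * S * (M * A)) i j := by
      rw [← Matrix.sum_apply, ← Finset.sum_mul, ← Finset.mul_sum, ← hS]
    have e2 : ∑ q' : Fin n, (A * M * (Z q' * Z p)) i j = (A * M * (S * Z p)) i j := by
      rw [← Matrix.sum_apply, ← Finset.mul_sum, ← Finset.sum_mul, ← hS]
    rw [e1, e2]
    have e3 : Z p * S * (M * A) = Z p * (M * A) - Z p * A := by
      rw [Matrix.mul_assoc, ← Matrix.mul_assoc S, hSM, Matrix.sub_mul, Matrix.one_mul,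
        Matrix.mul_sub]
    have e4 : A * M * (S * Z p) = A * M * Z p - A * Z p := by
      rw [← Matrix.mul_assoc, Matrix.mul_assoc A M S, hMS, Matrix.mul_sub, Matrix.mul_one,
        Matrix.sub_mul]
    rw [e3, e4]
    have hne : ¬(Fin.last n = p.castSucc) := (Fin.castSucc_lt_last p).ne'
    rw [if_neg hne]
    simp only [Matrix.sub_apply]
    ring
end

section
/- Let n ≥ 1, d ≥ 1, and let Z^(1), …, Z^(n) be d×d Hermitian positive semidefinite complex matrices such that Id − Σ_{p=1}^n Z^(p) is positive semidefinite. Let M be the (nd)×(nd) block matrix with d×d blocks M_{pq} := δ_{pq} Z^(p) − Z^(p) Z^(q), i.e. M_{(p,i),(q,j)} = δ_{pq} Z^(p)_{ij} − (Z^(p) Z^(q))_{ij}. Then M is Hermitian positive semidefinite. Moreover, if each Z^(p) is positive definite, then M is positive definite if and only if Id − Σ_{p=1}^n Z^(p) is positive definite. -/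
/-!
Write `y p` for the `p`-th block of `x` and `u = ∑ q, Z q *ᵥ y q`. Then `M *ᵥ x` has blocks
`Z p *ᵥ (y p - u)`, and the quadratic form of `M` is the sum of squares
`x* M x = u* (1 - ∑ Z) u + ∑ p, (y p - u)* Z p (y p - u)`.
This gives positivity, and definiteness when `1 - ∑ Z` and all `Z p` are definite (if `u = 0`, some
`y p` is nonzero). Conversely, if `(1 - ∑ Z) v = 0` then `u = v` for `x = (v, …, v)`, so `M x = 0`.
-/

open Finset Matrix ComplexOrder

namespace Matrix

variable {ι m R 𝕜 : Type*} [DecidableEq ι] [Fintype m]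

/-- The matrix analogue of the multinomial covariance `diag z - z zᵀ`. -/
def multinomialCov [Ring R] (Z : ι → Matrix m m R) : Matrix (ι × m) (ι × m) R :=
  of fun pi qj => (if pi.1 = qj.1 then Z pi.1 pi.2 qj.2 else 0) - (Z pi.1 * Z qj.1) pi.2 qj.2

section CommRing

variable [CommRing R]

theorem isHermitian_multinomialCov [StarRing R] {Z : ι → Matrix m m R}
    (hZ : ∀ p, (Z p).IsHermitian) :
    (multinomialCov Z).IsHermitian := by
  ext ⟨p, i⟩ ⟨q, j⟩
  simp only [multinomialCov, conjTranspose_apply, of_apply, star_sub, apply_ite star, star_zero]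
  congr 1
  · by_cases hpq : p = q
    · subst hpq
      rw [if_pos rfl, if_pos rfl, ← conjTranspose_apply, (hZ p).eq]
    · simp [hpq, Ne.symm hpq]
  · rw [← conjTranspose_apply, conjTranspose_mul, hZ, hZ]

variable [Fintype ι]

theorem multinomialCov_mulVec_apply (Z : ι → Matrix m m R) (x : ι × m → R) (p : ι) (i : m) :
    (multinomialCov Z *ᵥ x) (p, i)
      = (Z p *ᵥ (Function.curry x p - ∑ q, Z q *ᵥ Function.curry x q)) i := by
  rw [mulVec_sub, mulVec_sum]
  simp only [mulVec_mulVec, Pi.sub_apply, Finset.sum_apply]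
  simp only [multinomialCov, mulVec, dotProduct, of_apply, Fintype.sum_prod_type, sub_mul,
    Finset.sum_sub_distrib, ite_mul, zero_mul]
  congr 1
  simp

variable [StarRing R] [DecidableEq m]

theorem star_dotProduct_multinomialCov_mulVec (Z : ι → Matrix m m R) (x : ι × m → R)
    {u : m → R} (hu : ∑ q, Z q *ᵥ Function.curry x q = u) :
    star x ⬝ᵥ (multinomialCov Z *ᵥ x)
      = star u ⬝ᵥ ((1 - ∑ p, Z p) *ᵥ u)
        + ∑ p, star (Function.curry x p - u) ⬝ᵥ (Z p *ᵥ (Function.curry x p - u)) := by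
  have hform : star x ⬝ᵥ (multinomialCov Z *ᵥ x)
      = ∑ p, star (Function.curry x p) ⬝ᵥ (Z p *ᵥ (Function.curry x p - u)) := by
    simp only [dotProduct, Fintype.sum_prod_type, multinomialCov_mulVec_apply, hu]
    rfl
  have hu' : star u ⬝ᵥ u = ∑ p, star u ⬝ᵥ (Z p *ᵥ Function.curry x p) := by
    rw [← dotProduct_sum, hu]
  rw [hform, sub_mulVec, one_mulVec, dotProduct_sub, hu', sum_mulVec, dotProduct_sum]
  simp only [star_sub, sub_dotProduct, mulVec_sub, dotProduct_sub, Finset.sum_sub_distrib]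
  ring

end CommRing

section RCLike

variable [Fintype ι] [DecidableEq m] [RCLike 𝕜] {Z : ι → Matrix m m 𝕜}

theorem posSemidef_multinomialCov (hZ : ∀ p, (Z p).PosSemidef)
    (hS : (1 - ∑ p, Z p).PosSemidef) : (multinomialCov Z).PosSemidef := by
  refine .of_dotProduct_mulVec_nonneg (isHermitian_multinomialCov fun p => (hZ p).1) fun x => ?_
  rw [star_dotProduct_multinomialCov_mulVec Z x rfl]
  exact add_nonneg (hS.dotProduct_mulVec_nonneg _)
    (Finset.sum_nonneg fun p _ => (hZ p).dotProduct_mulVec_nonneg _)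

theorem posDef_multinomialCov (hZ : ∀ p, (Z p).PosDef) (hS : (1 - ∑ p, Z p).PosDef) :
    (multinomialCov Z).PosDef := by
  refine .of_dotProduct_mulVec_pos (isHermitian_multinomialCov fun p => (hZ p).1) fun x hx => ?_
  set u := ∑ q, Z q *ᵥ Function.curry x q
  rw [star_dotProduct_multinomialCov_mulVec Z x rfl]
  have hblocks : 0 ≤ ∑ p, star (Function.curry x p - u) ⬝ᵥ (Z p *ᵥ (Function.curry x p - u)) :=
    Finset.sum_nonneg fun p _ => (hZ p).posSemidef.dotProduct_mulVec_nonneg _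
  by_cases hu : u = 0
  · obtain ⟨⟨p, i⟩, hpi⟩ := Function.ne_iff.mp hx
    have hp : Function.curry x p - u ≠ 0 := by
      rw [hu, sub_zero]
      exact Function.ne_iff.mpr ⟨i, hpi⟩
    refine add_pos_of_nonneg_of_pos (hS.posSemidef.dotProduct_mulVec_nonneg _) ?_
    exact Finset.sum_pos' (fun q _ => (hZ q).posSemidef.dotProduct_mulVec_nonneg _)
      ⟨p, Finset.mem_univ p, (hZ p).dotProduct_mulVec_pos hp⟩
  · exact add_pos_of_pos_of_nonneg (hS.dotProduct_mulVec_pos hu) hblocks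

theorem posDef_one_sub_sum_of_posDef_multinomialCov [Nonempty ι]
    (hS : (1 - ∑ p, Z p).PosSemidef) (hM : (multinomialCov Z).PosDef) :
    (1 - ∑ p, Z p).PosDef := by
  refine .of_dotProduct_mulVec_pos hS.1 fun v hv => ?_
  refine (hS.dotProduct_mulVec_nonneg v).lt_of_ne fun hzero => ?_
  have hker : (1 - ∑ p, Z p) *ᵥ v = 0 := (hS.dotProduct_mulVec_zero_iff v).mp hzero.symm
  set x : ι × m → 𝕜 := fun pi => v pi.2
  have hx : x ≠ 0 := fun h => hv (funext fun i => congrFun h (Classical.arbitrary ι, i))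
  have hMx : multinomialCov Z *ᵥ x = 0 := by
    ext ⟨p, i⟩
    have hblock : Function.curry x p - ∑ q, Z q *ᵥ Function.curry x q = (1 - ∑ q, Z q) *ᵥ v := by
      rw [sub_mulVec, one_mulVec, sum_mulVec]
      rfl
    rw [multinomialCov_mulVec_apply, hblock, hker, mulVec_zero, Pi.zero_apply, Pi.zero_apply]
  simpa [hMx] using hM.dotProduct_mulVec_pos hx

end RCLike

end Matrix

theorem stmt_12_general (n d : ℕ) (hn : 1 ≤ n)
    (Z : Fin n → Matrix (Fin d) (Fin d) ℂ)
    (hZ : ∀ p, (Z p).PosSemidef)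
    (hsum : (1 - ∑ p, Z p).PosSemidef) :
    (Matrix.of fun pi qj : Fin n × Fin d =>
        (if pi.1 = qj.1 then Z pi.1 pi.2 qj.2 else 0)
          - (Z pi.1 * Z qj.1) pi.2 qj.2).PosSemidef
    ∧ ((∀ p, (Z p).PosDef) →
        ((Matrix.of fun pi qj : Fin n × Fin d =>
            (if pi.1 = qj.1 then Z pi.1 pi.2 qj.2 else 0)
              - (Z pi.1 * Z qj.1) pi.2 qj.2).PosDef
          ↔ (1 - ∑ p, Z p).PosDef)) := by
  have : Nonempty (Fin n) := ⟨⟨0, hn⟩⟩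
  exact ⟨posSemidef_multinomialCov hZ hsum, fun hZd =>
    ⟨posDef_one_sub_sum_of_posDef_multinomialCov hsum, posDef_multinomialCov hZd⟩⟩

/-- For Hermitian positive semidefinite `Z^(1),…,Z^(n)` with
`Id - Σ Z^(p)` positive semidefinite, the block matrix `M_{pq} = δ_{pq} Z^(p) - Z^(p) Z^(q)`
is Hermitian positive semidefinite; moreover, if each `Z^(p)` is positive definite, then `M`
is positive definite if and only if `Id - Σ Z^(p)` is. -/
theorem stmt_12 (n d : ℕ) (hn : 1 ≤ n) (hd : 1 ≤ d)
    (Z : Fin n → Matrix (Fin d) (Fin d) ℂ)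
    (hZ : ∀ p, (Z p).PosSemidef)
    (hsum : (1 - ∑ p, Z p).PosSemidef) :
    (Matrix.of fun pi qj : Fin n × Fin d =>
        (if pi.1 = qj.1 then Z pi.1 pi.2 qj.2 else 0)
          - (Z pi.1 * Z qj.1) pi.2 qj.2).PosSemidef
    ∧ ((∀ p, (Z p).PosDef) →
        ((Matrix.of fun pi qj : Fin n × Fin d =>
            (if pi.1 = qj.1 then Z pi.1 pi.2 qj.2 else 0)
              - (Z pi.1 * Z qj.1) pi.2 qj.2).PosDef
          ↔ (1 - ∑ p, Z p).PosDef)) :=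
  stmt_12_general n d hn Z hZ hsum
end

section
/- Let n ≥ 1, d ≥ 1, and let Z^(1), …, Z^(n) be d×d Hermitian positive semidefinite complex matrices. Let G be the (nd)×(nd) block matrix with d×d blocks G_{pq} := (Z^(p))^{1/2} (Z^(q))^{1/2}, where M^{1/2} denotes the positive semidefinite square root of a positive semidefinite Hermitian matrix M. Then for every λ ∈ ℂ: det( (λ−1)·Id_{nd} + G ) = (λ−1)^{(n−1)d} · det( λ·Id_d − (Id_d − Σ_{p=1}^n Z^(p)) ). -/
open Finset Matrix ComplexOrder

/-!
Write the block matrix `G` as `A * B`, where `A` stacks the square roots `(Z^(p))^{1/2}`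
vertically and `B` stacks them horizontally, so that `B * A = Σ_p Z^(p)`. Sylvester's
identity `det (c + A B) = c ^ (nd - d) * det (c + B A)` with `c = λ - 1` gives the claim.
-/

namespace Matrix.PosSemidef

/-- The positive semidefinite square root of a positive semidefinite matrix
(the definition of Mathlib of December 2024, since removed). -/
noncomputable def sqrt {n 𝕜 : Type*} [Fintype n] [RCLike 𝕜] [DecidableEq n]
    {A : Matrix n n 𝕜} (hA : PosSemidef A) : Matrix n n 𝕜 :=
  (hA.1.eigenvectorUnitary : Matrix n n 𝕜) *
    diagonal (((↑) : ℝ → 𝕜) ∘ (√·) ∘ hA.1.eigenvalues) *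
    (star hA.1.eigenvectorUnitary : Matrix n n 𝕜)

lemma sqrt_mul_self {n 𝕜 : Type*} [Fintype n] [RCLike 𝕜] [DecidableEq n]
    {A : Matrix n n 𝕜} (hA : PosSemidef A) : hA.sqrt * hA.sqrt = A := by
  have hU : (star hA.1.eigenvectorUnitary : Matrix n n 𝕜) * hA.1.eigenvectorUnitary = 1 :=
    Unitary.star_mul_self_of_mem hA.1.eigenvectorUnitary.2
  conv_rhs => rw [hA.1.spectral_theorem, Unitary.conjStarAlgAut_apply]
  simp only [sqrt, Matrix.mul_assoc]
  rw [← Matrix.mul_assoc _ (hA.1.eigenvectorUnitary : Matrix n n 𝕜), hU, Matrix.one_mul,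
    ← Matrix.mul_assoc (diagonal _) (diagonal _), diagonal_mul_diagonal]
  congr 3
  funext i
  simp only [Function.comp_apply]
  rw [← RCLike.ofReal_mul, Real.mul_self_sqrt (hA.eigenvalues_nonneg i)]

end Matrix.PosSemidef

namespace Matrix

theorem det_smul_one_add_mul_comm_of_le {m n R : Type*} [Fintype m] [Fintype n]
    [DecidableEq m] [DecidableEq n] [CommRing R] (A : Matrix m n R) (B : Matrix n m R) (c : R)
    (h : Fintype.card n ≤ Fintype.card m) :
    (c • 1 + A * B).det = c ^ (Fintype.card m - Fintype.card n) * (c • 1 + B * A).det := by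
  simpa [eval_charpoly, smul_one_eq_diagonal, sub_eq_add_neg] using
    congrArg (Polynomial.eval c) (charpoly_mul_comm_of_le (-A) B h)

section Stack

variable {ι m n k l R : Type*}

def stackRows (S : ι → Matrix m k R) : Matrix (ι × m) k R :=
  of fun pi j => S pi.1 pi.2 j

def stackCols (T : ι → Matrix k n R) : Matrix k (ι × n) R :=
  of fun i qj => T qj.1 i qj.2

variable [NonUnitalNonAssocSemiring R]

theorem stackRows_mul_stackCols [Fintype k] (S : ι → Matrix m k R) (T : ι → Matrix k n R) :
    stackRows S * stackCols T =
      of fun (pi : ι × m) (qj : ι × n) => (S pi.1 * T qj.1) pi.2 qj.2 :=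
  rfl

theorem stackCols_mul_stackRows [Fintype ι] [Fintype n] (T : ι → Matrix k n R)
    (S : ι → Matrix n l R) : stackCols T * stackRows S = ∑ p, T p * S p := by
  ext i j
  simp only [mul_apply, sum_apply, stackRows, stackCols, of_apply, Fintype.sum_prod_type]

end Stack

end Matrix

theorem stmt_13_general (n d : ℕ) (hn : 1 ≤ n)
    (Z : Fin n → Matrix (Fin d) (Fin d) ℂ)
    (hZ : ∀ p, (Z p).PosSemidef)
    (lam : ℂ) :
    ((lam - 1) • (1 : Matrix (Fin n × Fin d) (Fin n × Fin d) ℂ)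
        + Matrix.of fun pi qj : Fin n × Fin d =>
            ((hZ pi.1).sqrt * (hZ qj.1).sqrt) pi.2 qj.2).det
      = (lam - 1) ^ ((n - 1) * d)
        * (lam • (1 : Matrix (Fin d) (Fin d) ℂ) - (1 - ∑ p, Z p)).det := by
  let S p := (hZ p).sqrt
  have hcard : Fintype.card (Fin d) ≤ Fintype.card (Fin n × Fin d) := by
    simpa using Nat.le_mul_of_pos_left d hn
  have hshift : lam • 1 - (1 - ∑ p, Z p) = (lam - 1) • 1 + ∑ p, Z p := by
    rw [sub_smul, one_smul]; abel
  rw [← stackRows_mul_stackCols S S, det_smul_one_add_mul_comm_of_le _ _ _ hcard,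
    stackCols_mul_stackRows, hshift]
  simp [S, PosSemidef.sqrt_mul_self, Nat.sub_one_mul]

/-- The Sylvester-type determinant identity for the block matrix
`G_{pq} = (Z^(p))^{1/2} (Z^(q))^{1/2}`:
`det((λ-1)·Id + G) = (λ-1)^{(n-1)d} · det(λ·Id - (Id - Σ Z^(p)))`. -/
theorem stmt_13 (n d : ℕ) (hn : 1 ≤ n) (hd : 1 ≤ d)
    (Z : Fin n → Matrix (Fin d) (Fin d) ℂ)
    (hZ : ∀ p, (Z p).PosSemidef)
    (lam : ℂ) :
    ((lam - 1) • (1 : Matrix (Fin n × Fin d) (Fin n × Fin d) ℂ)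
        + Matrix.of fun pi qj : Fin n × Fin d =>
            ((hZ pi.1).sqrt * (hZ qj.1).sqrt) pi.2 qj.2).det
      = (lam - 1) ^ ((n - 1) * d)
        * (lam • (1 : Matrix (Fin d) (Fin d) ℂ) - (1 - ∑ p, Z p)).det :=
  stmt_13_general n d hn Z hZ lam
end

section
/- With the notation of the matrix-extracting procedure — N×N complex matrix u, partition I_1,…,I_{n+1} of {1,…,N} with |I_i| = d_i, Z^(p)_{ab}(u) := Σ_{r∈I_p} u_{ar} conj(u_{br}), and for k < l, Ω_R^{kl} := E_{lk} − E_{kl}, Ω_S^{kl} := √−1(E_{lk} + E_{kl}) — the following holds for all 1 ≤ p ≠ q ≤ n+1, all 1 ≤ r ≤ n+1, all 1 ≤ i,j ≤ d, and every N×N complex matrix u: Σ_{k ∈ I_p, l ∈ I_q} [ (d²/dt²)|_{t=0} Z^(r)_{ij}(u·exp(tΩ_R^{kl})) + (d²/dt²)|_{t=0} Z^(r)_{ij}(u·exp(tΩ_S^{kl})) ] = 1_{r=p} · 4 ( d_p Z^(q)_{ij}(u) − d_q Z^(p)_{ij}(u) ) − 1_{r=q} · 4 ( d_p Z^(q)_{ij}(u)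 − d_q Z^(p)_{ij}(u) ). -/
/-!
Write `D_S` for the diagonal projection onto the coordinates in `S`, so that the extracted
matrix is a corner of `u D_S uᴴ`. Along `t ↦ u exp(tΩ)` the second derivative at `0` of
`u exp(tΩ) D_S (u exp(tΩ))ᴴ` is `u (Ω² D_S + 2 Ω D_S Ωᴴ + D_S Ωᴴ²) uᴴ`. For the two generators
`Ω_R^{kl}, Ω_S^{kl}` with `k ≠ l` these middle matrices add up to
`4 (1_{k∈S} - 1_{l∈S}) (E_ll - E_kk)`, a purely algebraic identity between matrix units.
Summing over `k ∈ I_p`, `l ∈ I_q`, whose membership in `I_r` is decided by `r = p`, `r = q`,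
each `E_ll` is counted `d_p` times and each `E_kk` `d_q` times.
-/

open Finset Matrix

/-- The extracted matrix entries `Z^(p)_{ab}(u) = Σ_{r ∈ I_p} u_{ar} conj(u_{br})`. -/
noncomputable def extractZ17 {N : ℕ} (d : ℕ) (hdN : d ≤ N) (I : Finset (Fin N))
    (u : Matrix (Fin N) (Fin N) ℂ) : Matrix (Fin d) (Fin d) ℂ :=
  Matrix.of fun a b => ∑ r ∈ I, u (Fin.castLE hdN a) r * star (u (Fin.castLE hdN b) r)

open NormedSpace

namespace Matrix

variable {m n α : Type*} [DecidableEq n] [CommSemiring α]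

theorem single_mul_diagonal [DecidableEq m] [Fintype n] (i : m) (j : n) (c : α) (δ : n → α) :
    single i j c * diagonal δ = δ j • single i j c := by
  ext a b
  by_cases h : j = b <;> simp [mul_diagonal, single_apply, h, mul_comm]

theorem diagonal_mul_single [DecidableEq m] [Fintype m] (i : m) (j : n) (c : α) (δ : m → α) :
    diagonal δ * single i j c = δ i • single i j c := by
  ext a b
  by_cases h : i = a <;> simp [diagonal_mul, single_apply, h]

theorem mul_single_mul_conjTranspose_apply [Fintype n] [StarRing α] (u : Matrix m n α) (l : n)
    (a b : m) : (u * single l l (1 : α) * uᴴ) a b = u a l * star (u b l) := by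
  simp [mul_apply, single_apply, ite_and]

end Matrix

theorem Finset.sum_sum_sub_eq {ι κ M : Type*} [AddCommGroup M] (A : Finset ι) (B : Finset κ)
    (f : κ → M) (g : ι → M) :
    ∑ k ∈ A, ∑ l ∈ B, (f l - g k) = #A • ∑ l ∈ B, f l - #B • ∑ k ∈ A, g k := by
  simp only [sum_sub_distrib, sum_const, sum_nsmul]

theorem Finset.mem_iff_eq_of_forall_disjoint {ι α : Type*} {I : ι → Finset α}
    (hdisj : ∀ i j, i ≠ j → Disjoint (I i) (I j)) {x : α} {i j : ι} (hx : x ∈ I i) :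
    x ∈ I j ↔ j = i :=
  ⟨fun hxj => by_contra fun hji => disjoint_left.mp (hdisj j i hji) hxj hx, fun h => h ▸ hx⟩

section Gram

variable {m n : Type*} [Fintype n] [DecidableEq n]

theorem hasDerivAt_mul_exp_smul_apply (u : Matrix m n ℂ) (Ω : Matrix n n ℂ) (a : m) (s : n)
    (t : ℝ) :
    HasDerivAt (fun t : ℝ => (u * exp (t • Ω)) a s) ((u * Ω * exp (t • Ω)) a s) t := by
  let : NormedRing (Matrix n n ℂ) := Matrix.linftyOpNormedRing
  let : NormedAlgebra ℝ (Matrix n n ℂ) := Matrix.linftyOpNormedAlgebra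
  rw [Matrix.mul_assoc]
  exact (LinearMap.toContinuousLinearMap
    (entryLinearMap ℝ ℂ a s ∘ₗ mulLeftLinearMap n ℝ u)).hasFDerivAt.comp_hasDerivAt t
      (hasDerivAt_exp_smul_const' Ω t)

/-- The `(a, b)` entry of `u exp(tΩ) D_S (v exp(tΩ))ᴴ`. -/
noncomputable def gramAlongFlow (Ω : Matrix n n ℂ) (S : Finset n) (u v : Matrix m n ℂ) (a b : m)
    (t : ℝ) : ℂ :=
  ∑ s ∈ S, (u * exp (t • Ω)) a s * star ((v * exp (t • Ω)) b s)

variable (Ω : Matrix n n ℂ) (S : Finset n) (a b : m)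

theorem hasDerivAt_gramAlongFlow (u v : Matrix m n ℂ) (t : ℝ) :
    HasDerivAt (gramAlongFlow Ω S u v a b)
      (gramAlongFlow Ω S (u * Ω) v a b t + gramAlongFlow Ω S u (v * Ω) a b t) t := by
  rw [gramAlongFlow, gramAlongFlow, ← sum_add_distrib]
  exact HasDerivAt.fun_sum fun s _ =>
    (hasDerivAt_mul_exp_smul_apply u Ω a s t).mul (hasDerivAt_mul_exp_smul_apply v Ω b s t).star

theorem deriv_gramAlongFlow (u v : Matrix m n ℂ) :
    deriv (gramAlongFlow Ω S u v a b)
      = gramAlongFlow Ω S (u * Ω) v a b + gramAlongFlow Ω S u (v * Ω) a b :=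
  funext fun t => (hasDerivAt_gramAlongFlow Ω S a b u v t).deriv

theorem gramAlongFlow_zero (u v : Matrix m n ℂ) :
    gramAlongFlow Ω S u v a b 0
      = (u * diagonal (fun s => if s ∈ S then (1 : ℂ) else 0) * vᴴ) a b := by
  simp only [gramAlongFlow, zero_smul, exp_zero, Matrix.mul_one]
  rw [mul_apply]
  simp only [mul_diagonal, conjTranspose_apply, mul_ite, mul_one, mul_zero, ite_mul, zero_mul,
    sum_ite_mem, univ_inter]

/-- `(d/dt)² (exp(tΩ) D exp(tΩ)ᴴ)` at `t = 0`. -/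
def secondVariation (Ω D : Matrix n n ℂ) : Matrix n n ℂ :=
  Ω * Ω * D + 2 • (Ω * D * Ωᴴ) + D * Ωᴴ * Ωᴴ

theorem iteratedDeriv_two_gramAlongFlow (u : Matrix m n ℂ) :
    iteratedDeriv 2 (gramAlongFlow Ω S u u a b) 0
      = (u * secondVariation Ω (diagonal fun s => if s ∈ S then 1 else 0) * uᴴ) a b := by
  have h := (hasDerivAt_gramAlongFlow Ω S a b (u * Ω) u 0).add
    (hasDerivAt_gramAlongFlow Ω S a b u (u * Ω) 0)
  rw [iteratedDeriv_succ, iteratedDeriv_one, deriv_gramAlongFlow, h.deriv]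
  simp only [gramAlongFlow_zero, secondVariation, conjTranspose_mul, Matrix.mul_add, Matrix.add_mul,
    Matrix.add_apply, Matrix.mul_assoc, two_smul]
  ring

end Gram

section Generators

variable {n : Type*} [Fintype n] [DecidableEq n]

def omegaR (k l : n) : Matrix n n ℂ := single l k 1 - single k l 1

def omegaS (k l : n) : Matrix n n ℂ := Complex.I • (single l k 1 + single k l 1)

theorem secondVariation_omegaR_add_omegaS {k l : n} (hkl : k ≠ l) (δ : n → ℂ) :
    secondVariation (omegaR k l) (diagonal δ) + secondVariation (omegaS k l) (diagonal δ)
      = (4 * (δ k - δ l)) • (single l l 1 - single k k 1) := by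
  simp only [secondVariation, omegaR, omegaS, conjTranspose_sub, conjTranspose_add,
    conjTranspose_smul, conjTranspose_single, star_one, Complex.star_def, Complex.conj_I,
    mul_sub, sub_mul, mul_add, add_mul, smul_mul_assoc, mul_smul_comm, single_mul_single_same,
    single_mul_single_of_ne, hkl, hkl.symm, ne_eq, not_false_eq_true, smul_add, smul_sub,
    Complex.I_mul_I, neg_mul, mul_neg, neg_smul, single_mul_diagonal, diagonal_mul_single,
    smul_smul, mul_one, smul_zero, sub_zero, zero_sub, add_zero, zero_add]
  match_scalars <;> simp only [mul_neg, ← mul_assoc, Complex.I_mul_I] <;> ring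

theorem iteratedDeriv_two_gramAlongFlow_omegaR_add_omegaS {m : Type*} {k l : n} (hkl : k ≠ l)
    (S : Finset n) (u : Matrix m n ℂ) (a b : m) :
    iteratedDeriv 2 (gramAlongFlow (omegaR k l) S u u a b) 0
        + iteratedDeriv 2 (gramAlongFlow (omegaS k l) S u u a b) 0
      = 4 * ((if k ∈ S then 1 else 0) - (if l ∈ S then 1 else 0))
          * (u a l * star (u b l) - u a k * star (u b k)) := by
  rw [iteratedDeriv_two_gramAlongFlow, iteratedDeriv_two_gramAlongFlow, ← Matrix.add_apply,
    ← Matrix.add_mul, ← Matrix.mul_add, secondVariation_omegaR_add_omegaS hkl, Matrix.mul_smul,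
    Matrix.smul_mul, Matrix.smul_apply, Matrix.mul_sub, Matrix.sub_mul, Matrix.sub_apply,
    mul_single_mul_conjTranspose_apply, mul_single_mul_conjTranspose_apply, smul_eq_mul]

end Generators

theorem stmt_17_general (N n d : ℕ) (hdN : d ≤ N)
    (I : Fin (n + 1) → Finset (Fin N)) (dd : Fin (n + 1) → ℕ)
    (hdisj : ∀ i j, i ≠ j → Disjoint (I i) (I j))
    (hcard : ∀ i, (I i).card = dd i)
    (u : Matrix (Fin N) (Fin N) ℂ)
    (p q r : Fin (n + 1)) (hpq : p ≠ q) (i j : Fin d) :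
    ∑ k ∈ I p, ∑ l ∈ I q,
      (iteratedDeriv 2 (fun t : ℝ => extractZ17 d hdN (I r)
          (u * NormedSpace.exp (t • (Matrix.single l k (1 : ℂ)
            - Matrix.single k l 1))) i j) 0
        + iteratedDeriv 2 (fun t : ℝ => extractZ17 d hdN (I r)
          (u * NormedSpace.exp (t • (Complex.I • (Matrix.single l k (1 : ℂ)
            + Matrix.single k l 1)))) i j) 0)
      = (if r = p then (1 : ℂ) else 0)
          * (4 * ((dd p : ℂ) * extractZ17 d hdN (I q) u i j
              - (dd q : ℂ) * extractZ17 d hdN (I p) u i j))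
        - (if r = q then (1 : ℂ) else 0)
          * (4 * ((dd p : ℂ) * extractZ17 d hdN (I q) u i j
              - (dd q : ℂ) * extractZ17 d hdN (I p) u i j)) := by
  calc _ = ∑ k ∈ I p, ∑ l ∈ I q, 4 * ((if r = p then (1 : ℂ) else 0) - if r = q then 1 else 0)
          * (u (Fin.castLE hdN i) l * star (u (Fin.castLE hdN j) l)
            - u (Fin.castLE hdN i) k * star (u (Fin.castLE hdN j) k)) := by
        refine sum_congr rfl fun k hk => sum_congr rfl fun l hl => ?_
        simp only [← mem_iff_eq_of_forall_disjoint hdisj hk,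
          ← mem_iff_eq_of_forall_disjoint hdisj hl]
        exact iteratedDeriv_two_gramAlongFlow_omegaR_add_omegaS
          (ne_of_mem_of_not_mem hl (disjoint_left.mp (hdisj p q hpq) hk)).symm (I r) u _ _
    _ = _ := by
        simp only [← mul_sum, sum_sum_sub_eq, hcard, nsmul_eq_mul, extractZ17, of_apply]
        ring

/-- The action of
`L^{(pq)} = Σ_{k∈I_p, l∈I_q} (V_{R_{kl}}² + V_{S_{kl}}²)` on the entries of the extracted
matrices: the sum over `k ∈ I_p`, `l ∈ I_q` of the second derivatives at `t = 0` of
`t ↦ Z^(r)_{ij}(u·exp(tΩ))` along `Ω_R^{kl}` and `Ω_S^{kl}` equals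
`1_{r=p}·4(d_p Z^(q)_{ij} - d_q Z^(p)_{ij}) - 1_{r=q}·4(d_p Z^(q)_{ij} - d_q Z^(p)_{ij})`. -/
theorem stmt_17 (N n d : ℕ) (hN : 1 ≤ N) (hdN : d ≤ N)
    (I : Fin (n + 1) → Finset (Fin N)) (dd : Fin (n + 1) → ℕ)
    (hdisj : ∀ i j, i ≠ j → Disjoint (I i) (I j))
    (hcover : ∀ r, ∃ i, r ∈ I i)
    (hcard : ∀ i, (I i).card = dd i)
    (u : Matrix (Fin N) (Fin N) ℂ)
    (p q r : Fin (n + 1)) (hpq : p ≠ q) (i j : Fin d) :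
    ∑ k ∈ I p, ∑ l ∈ I q,
      (iteratedDeriv 2 (fun t : ℝ => extractZ17 d hdN (I r)
          (u * NormedSpace.exp (t • (Matrix.single l k (1 : ℂ)
            - Matrix.single k l 1))) i j) 0
        + iteratedDeriv 2 (fun t : ℝ => extractZ17 d hdN (I r)
          (u * NormedSpace.exp (t • (Complex.I • (Matrix.single l k (1 : ℂ)
            + Matrix.single k l 1)))) i j) 0)
      = (if r = p then (1 : ℂ) else 0)
          * (4 * ((dd p : ℂ) * extractZ17 d hdN (I q) u i j
              - (dd q : ℂ) * extractZ17 d hdN (I p) u i j))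
        - (if r = q then (1 : ℂ) else 0)
          * (4 * ((dd p : ℂ) * extractZ17 d hdN (I q) u i j
              - (dd q : ℂ) * extractZ17 d hdN (I p) u i j)) :=
  stmt_17_general N n d hdN I dd hdisj hcard u p q r hpq i j
end

section
/- Let u be an N×N unitary complex matrix and let I_1, …, I_{n+1} be a partition of {1,…,N}. With Z^(p)_{ab}(u) := Σ_{r∈I_p} u_{ar} conj(u_{br}) for 1 ≤ a,b ≤ d, and with the directional derivatives 𝒱_R^{ij} f(u) := (d/dt)|_{t=0} f(u·exp(t(E_{ji}−E_{ij}))), 𝒱_S^{ij} f(u) := (d/dt)|_{t=0} f(u·exp(t√−1(E_{ji}+E_{ij}))), 𝒱_D^{ij} f(u) := (d/dt)|_{t=0} f(u·exp(t√−1(E_{ii}−E_{jj}))), one has for all 1 ≤ p, q ≤ n+1 and all 1 ≤ a,b,c,e ≤ d: (1/(4N)) Σ_{1 ≤ i < j ≤ N} [ 𝒱_R^{ij}(Z^(p)_{ab}) 𝒱_R^{ij}(Z^(q)_{ce}) + 𝒱_S^{ij}(Z^(p)_{ab}) 𝒱_S^{ij}(Z^(q)_{ce}) + (2/N) 𝒱_D^{ij}(Z^(p)_{ab})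 𝒱_D^{ij}(Z^(q)_{ce}) ] = (1/(2N)) δ_{pq} ( δ_{ae} Z^(p)_{cb} + δ_{cb} Z^(p)_{ae} ) − (1/(2N)) ( Z^(p)_{cb} Z^(q)_{ae} + Z^(p)_{ae} Z^(q)_{cb} ). -/
open Finset Matrix

/-- The extracted matrix entries `Z^(p)_{ab}(u) = Σ_{r ∈ I_p} u_{ar} conj(u_{br})`. -/
noncomputable def extractZ18 {N : ℕ} (d : ℕ) (hdN : d ≤ N) (I : Finset (Fin N))
    (u : Matrix (Fin N) (Fin N) ℂ) : Matrix (Fin d) (Fin d) ℂ :=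
  Matrix.of fun a b => ∑ r ∈ I, u (Fin.castLE hdN a) r * star (u (Fin.castLE hdN b) r)

/-- The vector field `V_{R_{ij}}` acting on `Z^(p)_{ab}`, as a derivative at `t = 0`. -/
noncomputable def VR18 {N : ℕ} (d : ℕ) (hdN : d ≤ N) (I : Finset (Fin N))
    (u : Matrix (Fin N) (Fin N) ℂ) (i j : Fin N) (a b : Fin d) : ℂ :=
  deriv (fun t : ℝ => extractZ18 d hdN I
    (u * NormedSpace.exp (t • (Matrix.single j i (1 : ℂ)
      - Matrix.single i j 1))) a b) 0

/-- The vector field `V_{S_{ij}}` acting on `Z^(p)_{ab}`, as a derivative at `t = 0`. -/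
noncomputable def VS18 {N : ℕ} (d : ℕ) (hdN : d ≤ N) (I : Finset (Fin N))
    (u : Matrix (Fin N) (Fin N) ℂ) (i j : Fin N) (a b : Fin d) : ℂ :=
  deriv (fun t : ℝ => extractZ18 d hdN I
    (u * NormedSpace.exp (t • (Complex.I • (Matrix.single j i (1 : ℂ)
      + Matrix.single i j 1)))) a b) 0

/-- The vector field `V_{D_{ij}}` acting on `Z^(p)_{ab}`, as a derivative at `t = 0`. -/
noncomputable def VD18 {N : ℕ} (d : ℕ) (hdN : d ≤ N) (I : Finset (Fin N))
    (u : Matrix (Fin N) (Fin N) ℂ) (i j : Fin N) (a b : Fin d) : ℂ :=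
  deriv (fun t : ℝ => extractZ18 d hdN I
    (u * NormedSpace.exp (t • (Complex.I • (Matrix.single i i (1 : ℂ)
      - Matrix.single j j 1)))) a b) 0

/-
Differentiating `Z^(p)_{ab}(u exp(tX))` at `t = 0` gives
`∑_{r ∈ I_p} ((uX)_{ar} conj(u_{br}) + u_{ar} conj((uX)_{br}))`. For the off-diagonal generators this
is `(1_{I_p}(i) - 1_{I_p}(j))` times `u_{aj} conj(u_{bi}) ± u_{ai} conj(u_{bj})`, whereas the diagonal
generators are skew-Hermitian and diagonal, so their two terms cancel. Since `√-1² = -1`,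
`V_R V_R + V_S V_S = 2 (1_{I_p}(i) - 1_{I_p}(j)) (1_{I_q}(i) - 1_{I_q}(j)) (f_j g_i + f_i g_j)` with
`f_r = u_{ar} conj(u_{er})` and `g_r = u_{cr} conj(u_{br})`. This is symmetric in `(i, j)` and
vanishes on the diagonal, so the sum over `i < j` is half of the full double sum, which factors
into single sums. Unitarity gives `∑_r f_r = δ_{ae}` and `∑_r g_r = δ_{cb}`, and disjointness of the
blocks turns the sums over `I_p ∩ I_q` into `δ_{pq} Z^(p)`.
-/

theorem Matrix.mul_single_apply {l m n α : Type*} [Fintype m] [DecidableEq m] [DecidableEq n]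
    [NonUnitalNonAssocSemiring α] (M : Matrix l m α) (i : m) (j : n) (c : α) (k : l) (r : n) :
    (M * Matrix.single i j c) k r = if r = j then M k i * c else 0 := by
  split_ifs with h
  · subst h; exact mul_single_apply_same c i r k M
  · exact mul_single_apply_of_ne c i j k r h M

theorem Finset.sum_sum_eq_two_mul_sum_sum_filter_lt {ι R : Type*} [Fintype ι] [LinearOrder ι]
    [NonAssocSemiring R] (h : ι → ι → R) (hsymm : ∀ i j, h i j = h j i)
    (hdiag : ∀ i, h i i = 0) :
    ∑ i, ∑ j, h i j = 2 * ∑ i, ∑ j ∈ univ.filter (i < ·), h i j := by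
  have hsplit : ∀ i j, h i j = (if i < j then h i j else 0) + (if j < i then h j i else 0) := by
    intro i j
    rcases lt_trichotomy i j with hij | rfl | hij
    · simp [hij, hij.not_gt]
    · simp [hdiag]
    · simp [hij, hij.not_gt, hsymm i j]
  calc ∑ i, ∑ j, h i j
      = ∑ i, ∑ j, (if i < j then h i j else 0) + ∑ i, ∑ j, (if j < i then h j i else 0) := by
        simp_rw [← sum_add_distrib, ← hsplit]
    _ = 2 * ∑ i, ∑ j ∈ univ.filter (i < ·), h i j := by
        rw [sum_comm (f := fun i j => if j < i then h j i else 0), ← two_mul]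
        simp_rw [sum_filter]

theorem Finset.sum_sum_sub_mul_sub_mul {ι R : Type*} [Fintype ι] [CommRing R]
    (P Q f g : ι → R) :
    ∑ i, ∑ j, (P i - P j) * (Q i - Q j) * (f j * g i + f i * g j)
      = 2 * ((∑ i, P i * Q i * g i) * ∑ i, f i + (∑ i, P i * Q i * f i) * ∑ i, g i
        - (∑ i, P i * g i) * ∑ i, Q i * f i - (∑ i, P i * f i) * ∑ i, Q i * g i) := by
  have hexpand : ∀ i j, (P i - P j) * (Q i - Q j) * (f j * g i + f i * g j)
      = P i * Q i * g i * f j + P i * Q i * f i * g j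
        + g i * (P j * Q j * f j) + f i * (P j * Q j * g j)
        - P i * g i * (Q j * f j) - Q i * g i * (P j * f j)
        - P i * f i * (Q j * g j) - Q i * f i * (P j * g j) := by
    intro i j; ring
  simp only [hexpand, sum_add_distrib, sum_sub_distrib, ← mul_sum, ← sum_mul]
  ring

theorem Matrix.sum_mul_star_of_mem_unitaryGroup {n α : Type*} [Fintype n] [DecidableEq n]
    [CommRing α] [StarRing α] {u : Matrix n n α} (hu : u ∈ unitaryGroup n α) (k l : n) :
    ∑ r, u k r * star (u l r) = if k = l then 1 else 0 := by
  simpa [mul_apply, one_apply] using congrFun (congrFun (mem_unitaryGroup_iff.mp hu) k) l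

theorem Finset.sum_inter_of_pairwise_disjoint {ι α M : Type*} [DecidableEq ι] [DecidableEq α]
    [AddCommMonoid M] (I : ι → Finset α) (hdisj : ∀ i j, i ≠ j → Disjoint (I i) (I j))
    (f : α → M) (p q : ι) :
    ∑ r ∈ I p ∩ I q, f r = if p = q then ∑ r ∈ I p, f r else 0 := by
  split_ifs with hpq
  · rw [hpq, inter_self]
  · rw [disjoint_iff_inter_eq_empty.mp (hdisj p q hpq), sum_empty]

section MatrixExp

attribute [local instance] Matrix.linftyOpNormedAddCommGroup Matrix.linftyOpNormedRing
  Matrix.linftyOpNormedAlgebra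

theorem Matrix.hasDerivAt_mul_exp_smul_apply {n 𝕜 : Type*} [Fintype n] [DecidableEq n]
    [RCLike 𝕜] (u X : Matrix n n 𝕜) (k l : n) :
    HasDerivAt (fun t : ℝ => (u * NormedSpace.exp (t • X)) k l) ((u * X) k l) 0 := by
  have hexp : HasDerivAt (fun t : ℝ => u * NormedSpace.exp (t • X)) (u * X) 0 := by
    have h := (hasDerivAt_exp_smul_const (𝕂 := ℝ) X 0).const_mul u
    rw [zero_smul, NormedSpace.exp_zero, one_mul] at h
    exact h
  exact ((entryLinearMap ℝ 𝕜 k l).toContinuousLinearMap.hasFDerivAt).comp_hasDerivAt 0 hexp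

end MatrixExp

theorem hasDerivAt_extractZ18_mul_exp {N : ℕ} (d : ℕ) (hdN : d ≤ N) (I : Finset (Fin N))
    (u X : Matrix (Fin N) (Fin N) ℂ) (a b : Fin d) :
    HasDerivAt (fun t : ℝ => extractZ18 d hdN I (u * NormedSpace.exp (t • X)) a b)
      (∑ r ∈ I, ((u * X) (Fin.castLE hdN a) r * star (u (Fin.castLE hdN b) r)
        + u (Fin.castLE hdN a) r * star ((u * X) (Fin.castLE hdN b) r))) 0 := by
  have h := HasDerivAt.fun_sum (u := I) fun r _ =>
    (u.hasDerivAt_mul_exp_smul_apply X (Fin.castLE hdN a) r).mul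
      (u.hasDerivAt_mul_exp_smul_apply X (Fin.castLE hdN b) r).star
  simpa [extractZ18] using h

section VectorFields

variable {N : ℕ} (d : ℕ) (hdN : d ≤ N) (I : Finset (Fin N)) (u : Matrix (Fin N) (Fin N) ℂ)
  (i j : Fin N)

theorem VR18_eq (a b : Fin d) :
    VR18 d hdN I u i j a b
    = ((if i ∈ I then (1 : ℂ) else 0) - (if j ∈ I then 1 else 0))
      * (u (Fin.castLE hdN a) j * star (u (Fin.castLE hdN b) i)
        + u (Fin.castLE hdN a) i * star (u (Fin.castLE hdN b) j)) := by
  rw [VR18, (hasDerivAt_extractZ18_mul_exp d hdN I u _ a b).deriv]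
  simp only [Matrix.sub_apply, mul_single_apply, mul_one, star_sub, apply_ite star, star_zero,
    sub_mul, mul_sub, ite_mul, mul_ite, zero_mul, mul_zero, sum_add_distrib, sum_sub_distrib,
    sum_ite_eq']
  split_ifs <;> ring

theorem VS18_eq (a b : Fin d) :
    VS18 d hdN I u i j a b
    = Complex.I * ((if i ∈ I then (1 : ℂ) else 0) - (if j ∈ I then 1 else 0))
      * (u (Fin.castLE hdN a) j * star (u (Fin.castLE hdN b) i)
        - u (Fin.castLE hdN a) i * star (u (Fin.castLE hdN b) j)) := by
  rw [VS18, (hasDerivAt_extractZ18_mul_exp d hdN I u _ a b).deriv]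
  simp only [Matrix.mul_smul, Matrix.smul_apply, Matrix.add_apply, smul_eq_mul,
    mul_single_apply, mul_one, star_mul', star_add, apply_ite star, star_zero, Complex.star_def,
    Complex.conj_I, add_mul, mul_add, ite_mul, mul_ite, zero_mul, mul_zero, sum_add_distrib,
    sum_ite_eq']
  split_ifs <;> ring

theorem VD18_eq_zero (a b : Fin d) :
    VD18 d hdN I u i j a b = 0 := by
  rw [VD18, (hasDerivAt_extractZ18_mul_exp d hdN I u _ a b).deriv]
  refine sum_eq_zero fun r _ => ?_
  simp only [Matrix.mul_smul, Matrix.mul_sub, Matrix.smul_apply, Matrix.sub_apply, smul_eq_mul,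
    mul_single_apply, mul_one, star_mul', star_sub, apply_ite star, star_zero, Complex.star_def,
    Complex.conj_I]
  split_ifs <;> subst_vars <;> ring

theorem VR18_mul_add_VS18_mul (J : Finset (Fin N)) (a b c e : Fin d) :
    VR18 d hdN I u i j a b * VR18 d hdN J u i j c e
        + VS18 d hdN I u i j a b * VS18 d hdN J u i j c e
      = 2 * (((if i ∈ I then (1 : ℂ) else 0) - (if j ∈ I then 1 else 0))
          * ((if i ∈ J then (1 : ℂ) else 0) - (if j ∈ J then 1 else 0))
          * (u (Fin.castLE hdN a) j * star (u (Fin.castLE hdN e) j)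
              * (u (Fin.castLE hdN c) i * star (u (Fin.castLE hdN b) i))
            + u (Fin.castLE hdN a) i * star (u (Fin.castLE hdN e) i)
              * (u (Fin.castLE hdN c) j * star (u (Fin.castLE hdN b) j)))) := by
  rw [VR18_eq, VR18_eq, VS18_eq, VS18_eq]
  ring_nf
  rw [Complex.I_sq]
  ring

end VectorFields

theorem stmt_18_general (N n d : ℕ) (hdN : d ≤ N)
    (I : Fin (n + 1) → Finset (Fin N))
    (hdisj : ∀ i j, i ≠ j → Disjoint (I i) (I j))
    (u : Matrix (Fin N) (Fin N) ℂ)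
    (hu : u ∈ Matrix.unitaryGroup (Fin N) ℂ)
    (p q : Fin (n + 1)) (a b c e : Fin d) :
    (1 / (4 * (N : ℂ))) * ∑ i : Fin N, ∑ j ∈ Finset.univ.filter (fun j => i < j),
        (VR18 d hdN (I p) u i j a b * VR18 d hdN (I q) u i j c e
          + VS18 d hdN (I p) u i j a b * VS18 d hdN (I q) u i j c e
          + (2 / (N : ℂ)) * VD18 d hdN (I p) u i j a b * VD18 d hdN (I q) u i j c e)
      = (1 / (2 * (N : ℂ))) * (if p = q then 1 else 0)
          * ((if a = e then (1 : ℂ) else 0) * extractZ18 d hdN (I p) u c b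
            + (if c = b then (1 : ℂ) else 0) * extractZ18 d hdN (I p) u a e)
        - (1 / (2 * (N : ℂ)))
          * (extractZ18 d hdN (I p) u c b * extractZ18 d hdN (I q) u a e
            + extractZ18 d hdN (I p) u a e * extractZ18 d hdN (I q) u c b) := by
  simp_rw [VD18_eq_zero, mul_zero, add_zero, VR18_mul_add_VS18_mul, ← mul_sum]
  rw [← sum_sum_eq_two_mul_sum_sum_filter_lt]
  · rw [sum_sum_sub_mul_sub_mul]
    simp only [ite_mul, one_mul, zero_mul, ← ite_and, ← mem_inter, sum_ite_mem, univ_inter,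
      sum_mul_star_of_mem_unitaryGroup hu, Fin.castLE_inj, sum_inter_of_pairwise_disjoint I hdisj,
      extractZ18, of_apply]
    split_ifs <;> ring
  case hsymm => intro i j; ring
  case hdiag => intro i; ring

/-- The carré du champ of the Brownian motion on `SU(N)` evaluated on the
entries of the extracted matrices:
`(1/4N) Σ_{i<j} [V_R(Z^(p)_{ab})V_R(Z^(q)_{ce}) + V_S·V_S + (2/N) V_D·V_D]
  = (1/2N) δ_{pq}(δ_{ae} Z^(p)_{cb} + δ_{cb} Z^(p)_{ae})
    - (1/2N)(Z^(p)_{cb} Z^(q)_{ae} + Z^(p)_{ae} Z^(q)_{cb})`. -/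
theorem stmt_18 (N n d : ℕ) (hN : 1 ≤ N) (hdN : d ≤ N)
    (I : Fin (n + 1) → Finset (Fin N))
    (hdisj : ∀ i j, i ≠ j → Disjoint (I i) (I j))
    (hcover : ∀ r, ∃ i, r ∈ I i)
    (u : Matrix (Fin N) (Fin N) ℂ)
    (hu : u ∈ Matrix.unitaryGroup (Fin N) ℂ)
    (p q : Fin (n + 1)) (a b c e : Fin d) :
    (1 / (4 * (N : ℂ))) * ∑ i : Fin N, ∑ j ∈ Finset.univ.filter (fun j => i < j),
        (VR18 d hdN (I p) u i j a b * VR18 d hdN (I q) u i j c e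
          + VS18 d hdN (I p) u i j a b * VS18 d hdN (I q) u i j c e
          + (2 / (N : ℂ)) * VD18 d hdN (I p) u i j a b * VD18 d hdN (I q) u i j c e)
      = (1 / (2 * (N : ℂ))) * (if p = q then 1 else 0)
          * ((if a = e then (1 : ℂ) else 0) * extractZ18 d hdN (I p) u c b
            + (if c = b then (1 : ℂ) else 0) * extractZ18 d hdN (I p) u a e)
        - (1 / (2 * (N : ℂ)))
          * (extractZ18 d hdN (I p) u c b * extractZ18 d hdN (I q) u a e
            + extractZ18 d hdN (I p) u a e * extractZ18 d hdN (I q) u c b) :=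
  stmt_18_general N n d hdN I hdisj u hu p q a b c e
end
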